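/- arXiv:1911.00672 — 10 statements merged into one kernel-verified Lean document; each statement's English description precedes it below -/
import Mathlib

section
/- Under these assumptions one has t* > 0; moreover for every t ∈ [0, t*) it holds that exp(α + 2√(νφ)·t) < 1 (so that f(t) is well defined), f(0) = exp(β₂), and f is differentiable on [0, t*) with f′(t) = ν·f(t)² − (ν+μ−β₁)·f(t) + μ for every t ∈ [0, t*). -/
/- STATEMENT 0: Fix ν > 0, μ > 0, β₁, β₂ ≥ 0. Define γ, φ, Δ, α, t* as in the context,
assume φ > 0 and Δ > 1, and define f by the explicit formula. Then t* > 0; for every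
t ∈ [0, t*) one has exp(α + 2√(νφ)·t) < 1; f(0) = exp(β₂); and f is differentiable on
[0, t*) with f′(t) = ν·f(t)² − (ν+μ−β₁)·f(t) + μ for every t ∈ [0, t*). -/
theorem stmt0 (ν μ β₁ β₂ γ φ Δ α tstar : ℝ) (f : ℝ → ℝ)
    (hν : 0 < ν) (hμ : 0 < μ) (hβ₁ : 0 ≤ β₁) (hβ₂ : 0 ≤ β₂)
    (hγ : γ = (ν + μ - β₁) / (2 * ν))
    (hφ : φ = ν * γ ^ 2 - μ)
    (hΔ : Δ = Real.sqrt (ν / φ) * (Real.exp β₂ - γ))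
    (hα : α = Real.log ((Δ - 1) / (Δ + 1)))
    (htstar : tstar = -α / (2 * Real.sqrt (ν * φ)))
    (hφpos : 0 < φ) (hΔ1 : 1 < Δ)
    (hf : ∀ t : ℝ, f t = Real.sqrt (φ / ν) *
        (2 / (1 - Real.exp (α + 2 * Real.sqrt (ν * φ) * t)) - 1) + γ) :
    0 < tstar ∧
      (∀ t ∈ Set.Ico (0 : ℝ) tstar, Real.exp (α + 2 * Real.sqrt (ν * φ) * t) < 1) ∧
      f 0 = Real.exp β₂ ∧
      ∀ t ∈ Set.Ico (0 : ℝ) tstar,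
        HasDerivWithinAt f (ν * f t ^ 2 - (ν + μ - β₁) * f t + μ)
          (Set.Ico (0 : ℝ) tstar) t := by
  have hc0 : (0:ℝ) ≤ φ / ν := (div_pos hφpos hν).le
  set c := Real.sqrt (φ / ν) with hcdef
  set s := Real.sqrt (ν * φ) with hsdef
  have hs : 0 < s := Real.sqrt_pos.mpr (mul_pos hν hφpos)
  have hcpos : 0 < c := Real.sqrt_pos.mpr (div_pos hφpos hν)
  have hc2 : ν * c ^ 2 = φ := by
    rw [hcdef, Real.sq_sqrt hc0]; field_simp
  have hcs : c * s = φ := by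
    rw [hcdef, hsdef, ← Real.sqrt_mul hc0,
      show φ / ν * (ν * φ) = φ ^ 2 by field_simp, Real.sqrt_sq hφpos.le]
  have hαneg : α < 0 := by
    rw [hα]
    apply Real.log_neg
    · apply div_pos <;> linarith
    · rw [div_lt_one (by linarith)]; linarith
  have htpos : 0 < tstar := by
    rw [htstar]; exact div_pos (by linarith) (by positivity)
  have hlt : ∀ t ∈ Set.Ico (0:ℝ) tstar, Real.exp (α + 2 * s * t) < 1 := by
    intro t ht
    have h2 : t < -α / (2 * s) := by rw [htstar] at ht; exact ht.2
    have h3 : t * (2 * s) < -α := (lt_div_iff₀ (by positivity)).mp h2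
    have : α + 2 * s * t < 0 := by nlinarith
    exact Real.exp_lt_one_iff.mpr this
  have hexpα : Real.exp α = (Δ - 1) / (Δ + 1) := by
    rw [hα]; exact Real.exp_log (div_pos (by linarith) (by linarith))
  have hcΔ : c * Δ = Real.exp β₂ - γ := by
    rw [hΔ, ← mul_assoc, hcdef, ← Real.sqrt_mul hc0,
      show φ / ν * (ν / φ) = 1 by field_simp, Real.sqrt_one, one_mul]
  have hf0 : f 0 = Real.exp β₂ := by
    rw [hf 0]
    have : α + 2 * s * 0 = α := by ring
    rw [this, hexpα]
    have h1 : Δ + 1 ≠ 0 := by linarith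
    have h2 : (1 : ℝ) - (Δ - 1) / (Δ + 1) = 2 / (Δ + 1) := by field_simp; ring
    rw [h2]
    field_simp
    linear_combination hcΔ
  refine ⟨htpos, hlt, hf0, ?_⟩
  intro t ht
  set E := Real.exp (α + 2 * s * t) with hE
  have hE1 : E < 1 := hlt t ht
  have hEpos : 0 < E := Real.exp_pos _
  have hD : (1:ℝ) - E ≠ 0 := by linarith
  have h1 : HasDerivAt (fun t : ℝ => α + 2 * s * t) (2 * s) t := by
    simpa using ((hasDerivAt_id t).const_mul (2 * s)).const_add α
  have h2 : HasDerivAt (fun t : ℝ => Real.exp (α + 2 * s * t)) (E * (2 * s)) t := h1.exp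
  have h3 : HasDerivAt (fun t : ℝ => 1 - Real.exp (α + 2 * s * t)) (0 - E * (2 * s)) t :=
    (hasDerivAt_const t 1).sub h2
  have h4 : HasDerivAt (fun t : ℝ => 2 / (1 - Real.exp (α + 2 * s * t)))
      ((0 * (1 - E) - 2 * (0 - E * (2 * s))) / (1 - E) ^ 2) t :=
    (hasDerivAt_const t 2).div h3 hD
  have h5 := ((h4.sub_const 1).const_mul c).add_const γ
  have hfeq : f = fun t : ℝ => c * (2 / (1 - Real.exp (α + 2 * s * t)) - 1) + γ :=
    funext hf
  rw [hfeq]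
  refine h5.hasDerivWithinAt.congr_deriv ?_
  symm
  have hγ2 : ν + μ - β₁ = 2 * ν * γ := by rw [hγ]; field_simp
  have hμ2 : μ = ν * γ ^ 2 - φ := by rw [hφ]; ring
  show ν * (c * (2 / (1 - Real.exp (α + 2 * s * t)) - 1) + γ) ^ 2 -
      (ν + μ - β₁) * (c * (2 / (1 - Real.exp (α + 2 * s * t)) - 1) + γ) + μ =
      c * ((0 * (1 - E) - 2 * (0 - E * (2 * s))) / (1 - E) ^ 2)
  rw [← hE, hγ2, hμ2]
  field_simp
  linear_combination (1 + E) ^ 2 * hc2 + (-4*E) * hcs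
end

section
/- If 0 < t₁ ≤ t* and h : [0, t₁) → ℝ is differentiable with h(0) = exp(β₂) and h′(t) = ν·h(t)² − (ν+μ−β₁)·h(t) + μ for every t ∈ [0, t₁), then h(t) = f(t) for every t ∈ [0, t₁); that is, f is the unique solution on [0, t*) of the Riccati equation f′ = ν f² − (ν+μ−β₁) f + μ with initial value exp(β₂). -/
/- STATEMENT 1: With the same data as in STATEMENT 0, if 0 < t₁ ≤ t* and h : [0, t₁) → ℝ
is differentiable with h(0) = exp(β₂) and h′(t) = ν·h(t)² − (ν+μ−β₁)·h(t) + μ on [0, t₁),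
then h = f on [0, t₁). -/
theorem stmt1 (ν μ β₁ β₂ γ φ Δ α tstar : ℝ) (f : ℝ → ℝ)
    (hν : 0 < ν) (hμ : 0 < μ) (hβ₁ : 0 ≤ β₁) (hβ₂ : 0 ≤ β₂)
    (hγ : γ = (ν + μ - β₁) / (2 * ν))
    (hφ : φ = ν * γ ^ 2 - μ)
    (hΔ : Δ = Real.sqrt (ν / φ) * (Real.exp β₂ - γ))
    (hα : α = Real.log ((Δ - 1) / (Δ + 1)))
    (htstar : tstar = -α / (2 * Real.sqrt (ν * φ)))
    (hφpos : 0 < φ) (hΔ1 : 1 < Δ)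
    (hf : ∀ t : ℝ, f t = Real.sqrt (φ / ν) *
        (2 / (1 - Real.exp (α + 2 * Real.sqrt (ν * φ) * t)) - 1) + γ)
    (t₁ : ℝ) (ht₁pos : 0 < t₁) (ht₁ : t₁ ≤ tstar) (h : ℝ → ℝ)
    (hh0 : h 0 = Real.exp β₂)
    (hhderiv : ∀ t ∈ Set.Ico (0 : ℝ) t₁,
      HasDerivWithinAt h (ν * h t ^ 2 - (ν + μ - β₁) * h t + μ)
        (Set.Ico (0 : ℝ) t₁) t) :
    ∀ t ∈ Set.Ico (0 : ℝ) t₁, h t = f t := by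
  set s := Real.sqrt (ν * φ) with hs_def
  set c := Real.sqrt (φ / ν) with hc_def
  have hspos : 0 < s := Real.sqrt_pos.2 (by positivity)
  have hcpos : 0 < c := Real.sqrt_pos.2 (by positivity)
  have hc2 : c ^ 2 = φ / ν := Real.sq_sqrt (by positivity)
  have hs2 : s ^ 2 = ν * φ := Real.sq_sqrt (by positivity)
  have hcs : c * s = φ := by
    have h1 : (c * s) ^ 2 = φ ^ 2 := by
      rw [mul_pow, hc2, hs2]; field_simp
    nlinarith [mul_pos hcpos hspos]
  have hαneg : α < 0 := by
    rw [hα]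
    apply Real.log_neg
    · apply div_pos <;> linarith
    · rw [div_lt_one (by linarith)]; linarith
  have hαstar : α + 2 * s * tstar = 0 := by
    rw [htstar]; field_simp; ring
  have hD : ∀ t : ℝ, t < tstar → 0 < 1 - Real.exp (α + 2 * s * t) := by
    intro t ht
    have h1 : α + 2 * s * t < 0 := by nlinarith
    have := Real.exp_lt_one_iff.2 h1
    linarith
  -- f 0 = exp β₂
  have hexpα : Real.exp α = (Δ - 1) / (Δ + 1) := by
    rw [hα]; exact Real.exp_log (div_pos (by linarith) (by linarith))
  have hcinv : c * Real.sqrt (ν / φ) = 1 := by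
    rw [hc_def, ← Real.sqrt_mul (by positivity)]
    rw [show φ / ν * (ν / φ) = 1 by field_simp]
    exact Real.sqrt_one
  have hf0 : f 0 = Real.exp β₂ := by
    rw [hf 0]
    have : α + 2 * s * 0 = α := by ring
    rw [this, hexpα]
    have hΔ1' : Δ + 1 ≠ 0 := by positivity
    have h1 : 1 - (Δ - 1) / (Δ + 1) = 2 / (Δ + 1) := by field_simp; ring
    rw [h1]
    have h2 : 2 / (2 / (Δ + 1)) - 1 = Δ := by field_simp; ring
    rw [h2, hΔ]
    rw [show c * (Real.sqrt (ν / φ) * (Real.exp β₂ - γ)) =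
      c * Real.sqrt (ν / φ) * (Real.exp β₂ - γ) by ring, hcinv]
    ring
  have h2νγ : ν + μ - β₁ = 2 * ν * γ := by rw [hγ]; field_simp
  -- derivative of f
  have key : ∀ t : ℝ, t < tstar →
      HasDerivAt f (ν * f t ^ 2 - (ν + μ - β₁) * f t + μ) t := by
    intro t ht
    have hDpos : 0 < 1 - Real.exp (α + 2 * s * t) := hD t ht
    set u := Real.exp (α + 2 * s * t) with hu_def
    have hlin : HasDerivAt (fun t : ℝ => α + 2 * s * t) (2 * s) t := by
      simpa using ((hasDerivAt_id t).const_mul (2 * s)).const_add α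
    have hu : HasDerivAt (fun t : ℝ => Real.exp (α + 2 * s * t)) (u * (2 * s)) t :=
      hlin.exp
    have hd : HasDerivAt (fun t : ℝ => 1 - Real.exp (α + 2 * s * t)) (-(u * (2 * s))) t := by
      simpa using hu.const_sub 1
    have hq : HasDerivAt (fun t : ℝ => 2 / (1 - Real.exp (α + 2 * s * t)))
        ((0 * (1 - u) - 2 * (-(u * (2 * s)))) / (1 - u) ^ 2) t :=
      (hasDerivAt_const t 2).div hd hDpos.ne'
    have hF : HasDerivAt f
        (c * ((0 * (1 - u) - 2 * (-(u * (2 * s)))) / (1 - u) ^ 2)) t := by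
      have : f = fun t => c * (2 / (1 - Real.exp (α + 2 * s * t)) - 1) + γ := funext hf
      rw [this]
      exact ((hq.sub_const 1).const_mul c).add_const γ
    have hd1 : (1 - u) ≠ 0 := hDpos.ne'
    have hνc : ν * c ^ 2 = φ := by rw [hc2]; field_simp
    have hval : c * ((0 * (1 - u) - 2 * (-(u * (2 * s)))) / (1 - u) ^ 2)
        = ν * f t ^ 2 - (ν + μ - β₁) * f t + μ := by
      rw [hf t, ← hu_def, h2νγ]
      have lhs_eq : c * ((0 * (1 - u) - 2 * (-(u * (2 * s)))) / (1 - u) ^ 2)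
          = (4 * c * s * u) / (1 - u) ^ 2 := by ring
      have rhs_eq : ν * (c * (2 / (1 - u) - 1) + γ) ^ 2
            - 2 * ν * γ * (c * (2 / (1 - u) - 1) + γ) + μ
          = (ν * c ^ 2 * (1 + u) ^ 2 - (ν * γ ^ 2 - μ) * (1 - u) ^ 2) / (1 - u) ^ 2 := by
        field_simp
        ring
      have num_eq : ν * c ^ 2 * (1 + u) ^ 2 - (ν * γ ^ 2 - μ) * (1 - u) ^ 2
          = 4 * c * s * u := by
        rw [hνc, ← hφ]
        linear_combination (-4 * u) * hcs
      rw [lhs_eq, rhs_eq, num_eq]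
    rw [hval] at hF
    exact hF
  -- Gronwall argument
  intro t₀ ht₀
  obtain ⟨ht₀0, ht₀1⟩ := ht₀
  have ht₀star : t₀ < tstar := lt_of_lt_of_le ht₀1 ht₁
  have hfc : ContinuousOn f (Set.Icc 0 t₀) := fun x hx =>
    ((key x (lt_of_le_of_lt hx.2 ht₀star)).continuousAt).continuousWithinAt
  have hsub : Set.Icc (0:ℝ) t₀ ⊆ Set.Ico 0 t₁ := fun x hx =>
    ⟨hx.1, lt_of_le_of_lt hx.2 ht₀1⟩
  have hhc : ContinuousOn h (Set.Icc 0 t₀) := fun x hx =>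
    ((hhderiv x (hsub hx)).continuousWithinAt).mono hsub
  set g := fun t => ν * (h t + f t) - 2 * ν * γ with hg_def
  have hgc : ContinuousOn g (Set.Icc 0 t₀) := by
    apply ContinuousOn.sub
    · exact continuousOn_const.mul (hhc.add hfc)
    · exact continuousOn_const
  obtain ⟨C, hC⟩ := (isCompact_Icc (a := (0:ℝ)) (b := t₀)).exists_bound_of_continuousOn hgc
  have hw : ∀ x ∈ Set.Icc (0:ℝ) t₀, ‖h x - f x‖ ≤ gronwallBound 0 C 0 (x - 0) := by
    apply norm_le_gronwallBound_of_norm_deriv_right_le (hhc.sub hfc)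
      (f' := fun x => g x * (h x - f x))
    · intro x hx
      have hx1 : x ∈ Set.Ico (0:ℝ) t₁ := ⟨hx.1, lt_trans hx.2 ht₀1⟩
      have hxstar : x < tstar := lt_trans hx.2 ht₀star
      have hhx : HasDerivWithinAt h (ν * h x ^ 2 - (ν + μ - β₁) * h x + μ)
          (Set.Ici x) x := by
        apply (hhderiv x hx1).mono_of_mem_nhdsWithin
        have h1 : Set.Iio t₁ ∈ nhdsWithin x (Set.Ici x) :=
          mem_nhdsWithin_of_mem_nhds (Iio_mem_nhds hx1.2)
        have h2 : Set.Ici x ∈ nhdsWithin x (Set.Ici x) := self_mem_nhdsWithin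
        filter_upwards [h1, h2] with y hy1 hy2
        exact ⟨le_trans hx1.1 hy2, hy1⟩
      have hfx : HasDerivWithinAt f (ν * f x ^ 2 - (ν + μ - β₁) * f x + μ)
          (Set.Ici x) x := (key x hxstar).hasDerivWithinAt
      have := hhx.sub hfx
      convert this using 1
      rw [hg_def, h2νγ]; ring
    · simp [hh0, hf0]
    · intro x hx
      have hx' : x ∈ Set.Icc (0:ℝ) t₀ := ⟨hx.1, le_of_lt hx.2⟩
      rw [norm_mul]
      have := hC x hx'
      calc ‖g x‖ * ‖h x - f x‖ ≤ C * ‖h x - f x‖ :=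
            mul_le_mul_of_nonneg_right this (norm_nonneg _)
        _ = C * ‖h x - f x‖ + 0 := by ring
  have := hw t₀ ⟨ht₀0, le_refl _⟩
  rw [gronwallBound_ε0_δ0] at this
  have : ‖h t₀ - f t₀‖ ≤ 0 := this
  have : h t₀ - f t₀ = 0 := by
    simpa using le_antisymm this (norm_nonneg _)
  linarith [this]
end

section
/- The function f blows up at the right endpoint of its interval of definition: f(t) tends to +∞ as t tends to t* from the left. In particular f is the maximal solution of the Riccati equation f′ = ν f² − (ν+μ−β₁) f + μ with initial value exp(β₂), defined exactly on [0, t*). -/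
/- STATEMENT 2: With the same data, f blows up at the right endpoint of its interval of
definition: f(t) → +∞ as t → t*⁻. -/
theorem stmt2 (ν μ β₁ β₂ γ φ Δ α tstar : ℝ) (f : ℝ → ℝ)
    (hν : 0 < ν) (hμ : 0 < μ) (hβ₁ : 0 ≤ β₁) (hβ₂ : 0 ≤ β₂)
    (hγ : γ = (ν + μ - β₁) / (2 * ν))
    (hφ : φ = ν * γ ^ 2 - μ)
    (hΔ : Δ = Real.sqrt (ν / φ) * (Real.exp β₂ - γ))
    (hα : α = Real.log ((Δ - 1) / (Δ + 1)))
    (htstar : tstar = -α / (2 * Real.sqrt (ν * φ)))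
    (hφpos : 0 < φ) (hΔ1 : 1 < Δ)
    (hf : ∀ t : ℝ, f t = Real.sqrt (φ / ν) *
        (2 / (1 - Real.exp (α + 2 * Real.sqrt (ν * φ) * t)) - 1) + γ) :
    Filter.Tendsto f (nhdsWithin tstar (Set.Iio tstar)) Filter.atTop := by
  set c : ℝ := 2 * Real.sqrt (ν * φ) with hc
  have hsq : 0 < Real.sqrt (ν * φ) := Real.sqrt_pos.2 (by positivity)
  have hcpos : 0 < c := by positivity
  have hk : 0 < Real.sqrt (φ / ν) := Real.sqrt_pos.2 (by positivity)
  -- exponent tends to 0 from below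
  have hval : α + c * tstar = 0 := by
    rw [htstar]
    field_simp
    ring
  have h1 : Filter.Tendsto (fun t => α + c * t) (nhdsWithin tstar (Set.Iio tstar))
      (nhdsWithin 0 (Set.Iio 0)) := by
    rw [tendsto_nhdsWithin_iff]
    constructor
    · have : Continuous (fun t : ℝ => α + c * t) := by continuity
      have := this.continuousAt (x := tstar)
      simpa [hval] using this.tendsto.mono_left nhdsWithin_le_nhds
    · filter_upwards [self_mem_nhdsWithin] with t ht
      have : t < tstar := ht
      have : α + c * t < α + c * tstar := by nlinarith
      simpa [hval] using this
  have h2 : Filter.Tendsto (fun t => 1 - Real.exp (α + c * t))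
      (nhdsWithin tstar (Set.Iio tstar)) (nhdsWithin 0 (Set.Ioi 0)) := by
    rw [tendsto_nhdsWithin_iff]
    constructor
    · have : Filter.Tendsto (fun t => 1 - Real.exp (α + c * t))
          (nhdsWithin tstar (Set.Iio tstar)) (nhds (1 - Real.exp 0)) :=
        (Real.continuous_exp.tendsto 0).comp (h1.mono_right nhdsWithin_le_nhds)
          |>.const_sub 1
      simpa using this
    · filter_upwards [h1 self_mem_nhdsWithin] with t ht
      have : Real.exp (α + c * t) < 1 := by
        rw [← Real.exp_zero]
        exact Real.exp_lt_exp.2 ht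
      simp only [Set.mem_Ioi]
      linarith
  have h3 : Filter.Tendsto (fun t => (1 - Real.exp (α + c * t))⁻¹)
      (nhdsWithin tstar (Set.Iio tstar)) Filter.atTop :=
    tendsto_inv_nhdsGT_zero.comp h2
  have h4 : Filter.Tendsto f (nhdsWithin tstar (Set.Iio tstar)) Filter.atTop := by
    have h5 : Filter.Tendsto
        (fun t => (2 * Real.sqrt (φ / ν)) * (1 - Real.exp (α + c * t))⁻¹ +
          (γ - Real.sqrt (φ / ν)))
        (nhdsWithin tstar (Set.Iio tstar)) Filter.atTop := by
      apply Filter.tendsto_atTop_add_const_right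
      exact h3.const_mul_atTop (by positivity)
    refine h5.congr fun t => ?_
    rw [hf t]
    ring
  exact h4
end

section
/- Suppose differentiable functions a, b, c : [0,T] → ℝ solve the system (ODE)_K, and define U(t, x) = a(t)·x² + b(t)·x + c(t). Then U solves the discrete Hamilton–Jacobi–Bellman equation: for every t ∈ [0, T) and every real x > 0, ∂ₜU(t,x) + sup over α ∈ ℝ of [ K·x·(ν + σ²K/2)·(U(t, x + 1/K) − U(t,x)) + K·x·(μ + α + σ²K/2)·(U(t, x − 1/K) − U(t,x)) − (α·x)²/2 ] = 0, and U(T, x) = −γ(x − x̃)² for all x. -/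
lemma sup_quad (p q r : ℝ) (hp : 0 < p) :
    (⨆ α : ℝ, (-p * α ^ 2 + q * α + r)) = q ^ 2 / (4 * p) + r := by
  have hval : -p * (q / (2 * p)) ^ 2 + q * (q / (2 * p)) + r = q ^ 2 / (4 * p) + r := by
    field_simp
    ring
  apply le_antisymm
  · apply ciSup_le
    intro α
    have h := sq_nonneg (2 * p * α - q)
    rw [div_add' _ _ _ (by positivity), le_div_iff₀ (by positivity)]
    nlinarith
  · calc q ^ 2 / (4 * p) + r = -p * (q / (2 * p)) ^ 2 + q * (q / (2 * p)) + r := hval.symm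
      _ ≤ ⨆ α : ℝ, (-p * α ^ 2 + q * α + r) := by
          apply le_ciSup (f := fun α : ℝ => -p * α ^ 2 + q * α + r) ?_ (q / (2 * p))
          refine ⟨q ^ 2 / (4 * p) + r, ?_⟩
          rintro _ ⟨α, rfl⟩
          simp only
          have h := sq_nonneg (2 * p * α - q)
          rw [div_add' _ _ _ (by positivity), le_div_iff₀ (by positivity)]
          nlinarith

/- STATEMENT 5 -/
theorem stmt5 (ν μ σ γ xt T K : ℝ) (hσ : 0 < σ) (hγ : 0 < γ) (hxt : 0 < xt)
    (hT : 0 < T) (hK : 0 < K)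
    (a b c a' b' c' : ℝ → ℝ) (U : ℝ → ℝ → ℝ)
    (hda : ∀ t ∈ Set.Icc (0 : ℝ) T, HasDerivWithinAt a (a' t) (Set.Icc (0 : ℝ) T) t)
    (hodea : ∀ t ∈ Set.Icc (0 : ℝ) T, a' t + 2 * a t * (ν - μ) + 2 * a t ^ 2 = 0)
    (haT : a T = -γ)
    (hdb : ∀ t ∈ Set.Icc (0 : ℝ) T, HasDerivWithinAt b (b' t) (Set.Icc (0 : ℝ) T) t)
    (hodeb : ∀ t ∈ Set.Icc (0 : ℝ) T,
      b' t - 2 * a t * (a t / K - b t) + a t * (σ ^ 2 + (μ + ν) / K) + b t * (ν - μ) = 0)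
    (hbT : b T = 2 * γ * xt)
    (hdc : ∀ t ∈ Set.Icc (0 : ℝ) T, HasDerivWithinAt c (c' t) (Set.Icc (0 : ℝ) T) t)
    (hodec : ∀ t ∈ Set.Icc (0 : ℝ) T, c' t + (1 / 2) * (a t / K - b t) ^ 2 = 0)
    (hcT : c T = -γ * xt ^ 2)
    (hU : ∀ t x : ℝ, U t x = a t * x ^ 2 + b t * x + c t) :
    (∀ t ∈ Set.Ico (0 : ℝ) T, ∀ x : ℝ, 0 < x →
      HasDerivWithinAt (fun s => U s x)
        (-(⨆ α : ℝ, K * x * (ν + σ ^ 2 * K / 2) * (U t (x + 1 / K) - U t x)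
            + K * x * (μ + α + σ ^ 2 * K / 2) * (U t (x - 1 / K) - U t x)
            - (α * x) ^ 2 / 2))
        (Set.Icc (0 : ℝ) T) t) ∧
    ∀ x : ℝ, U T x = -γ * (x - xt) ^ 2 := by
  constructor
  · intro t ht x hx
    have ht' : t ∈ Set.Icc (0 : ℝ) T := ⟨ht.1, ht.2.le⟩
    set C1 : ℝ := K * x * (ν + σ ^ 2 * K / 2) * (U t (x + 1 / K) - U t x) with hC1
    set Dv : ℝ := U t (x - 1 / K) - U t x with hDv
    have heq : ∀ α : ℝ,
        K * x * (ν + σ ^ 2 * K / 2) * (U t (x + 1 / K) - U t x)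
          + K * x * (μ + α + σ ^ 2 * K / 2) * (U t (x - 1 / K) - U t x)
          - (α * x) ^ 2 / 2
        = -(x ^ 2 / 2) * α ^ 2 + (K * x * Dv) * α
          + (C1 + K * x * (μ + σ ^ 2 * K / 2) * Dv) := by
      intro α; rw [hC1, hDv]; ring
    have hsup : (⨆ α : ℝ, K * x * (ν + σ ^ 2 * K / 2) * (U t (x + 1 / K) - U t x)
          + K * x * (μ + α + σ ^ 2 * K / 2) * (U t (x - 1 / K) - U t x)
          - (α * x) ^ 2 / 2)
        = (K * x * Dv) ^ 2 / (4 * (x ^ 2 / 2)) + (C1 + K * x * (μ + σ ^ 2 * K / 2) * Dv) := by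
      rw [show (fun α : ℝ => K * x * (ν + σ ^ 2 * K / 2) * (U t (x + 1 / K) - U t x)
          + K * x * (μ + α + σ ^ 2 * K / 2) * (U t (x - 1 / K) - U t x)
          - (α * x) ^ 2 / 2)
        = fun α : ℝ => -(x ^ 2 / 2) * α ^ 2 + (K * x * Dv) * α
          + (C1 + K * x * (μ + σ ^ 2 * K / 2) * Dv) from funext heq]
      exact sup_quad _ _ _ (by positivity)
    have hd : HasDerivWithinAt (fun s => a s * x ^ 2 + b s * x + c s)
        (a' t * x ^ 2 + b' t * x + c' t) (Set.Icc (0 : ℝ) T) t :=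
      (((hda t ht').mul_const _).add ((hdb t ht').mul_const _)).add (hdc t ht')
    have hd' : HasDerivWithinAt (fun s => U s x)
        (a' t * x ^ 2 + b' t * x + c' t) (Set.Icc (0 : ℝ) T) t := by
      simpa only [hU] using hd
    have ha' := hodea t ht'
    have hb' := hodeb t ht'
    have hc' := hodec t ht'
    have key : -((K * x * Dv) ^ 2 / (4 * (x ^ 2 / 2)) + (C1 + K * x * (μ + σ ^ 2 * K / 2) * Dv))
        = a' t * x ^ 2 + b' t * x + c' t := by
      rw [hC1, hDv, hU, hU, hU]
      have hA : a' t = -(2 * a t * (ν - μ) + 2 * a t ^ 2) := by linarith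
      have hB : b' t = 2 * a t * (a t / K - b t) - a t * (σ ^ 2 + (μ + ν) / K)
          - b t * (ν - μ) := by linarith
      have hC : c' t = -((1 / 2) * (a t / K - b t) ^ 2) := by linarith
      rw [hA, hB, hC]
      field_simp
      ring
    rw [hsup, key]
    exact hd'
  · intro x
    rw [hU, haT, hbT, hcT]
    ring
end

section
/- Suppose differentiable functions a, b, c : [0,T] → ℝ solve the system (ODE): a′(t) + 2a(t)(ν−μ) + 2a(t)² = 0 with a(T) = −γ; b′(t) + 2a(t)b(t) + a(t)σ² + b(t)(ν−μ) = 0 with b(T) = 2γ·x̃; c′(t) + b(t)²/2 = 0 with c(T) = −γ·x̃². Define U(t, x) = a(t)·x² + b(t)·x + c(t). Then U solves the continuous Hamilton–Jacobi–Bellman equation: for every t ∈ [0, T) and every real x > 0, ∂ₜU(t,x) + sup over α ∈ ℝ of [ (ν − μ − α)·x·∂ₓU(t,x) − (α·x)²/2 + (1/2)·x·σ²·∂ₓₓU(t,x) ] = 0, and U(T, x) = −γ(x − x̃)² for all x. -/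
lemma quad_hasDerivAt (A B C x : ℝ) :
    HasDerivAt (fun y => A * y ^ 2 + B * y + C) (2 * A * x + B) x := by
  have h1 : HasDerivAt (fun y : ℝ => A * y ^ 2) (A * (2 * x)) x := by
    simpa using (hasDerivAt_pow 2 x).const_mul A
  have h2 : HasDerivAt (fun y : ℝ => B * y) B x := by
    simpa using (hasDerivAt_id x).const_mul B
  have := (h1.add h2).add_const C
  exact this.congr_deriv (by ring)

lemma deriv_quad (A B C : ℝ) :
    deriv (fun y => A * y ^ 2 + B * y + C) = fun x => 2 * A * x + B := by
  funext x
  exact (quad_hasDerivAt A B C x).deriv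

lemma deriv2_quad (A B C : ℝ) (x : ℝ) :
    deriv (deriv (fun y => A * y ^ 2 + B * y + C)) x = 2 * A := by
  rw [deriv_quad]
  have : HasDerivAt (fun x : ℝ => 2 * A * x + B) (2 * A) x := by
    simpa using ((hasDerivAt_id x).const_mul (2 * A)).add_const B
  exact this.deriv

lemma sup_calc (x D E νμ : ℝ) (hx : 0 < x) :
    (⨆ α : ℝ, (νμ - α) * x * D - (α * x) ^ 2 / 2 + E)
      = D ^ 2 / 2 + νμ * x * D + E := by
  have key : ∀ α : ℝ, (νμ - α) * x * D - (α * x) ^ 2 / 2 + E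
      = D ^ 2 / 2 + νμ * x * D + E - (α * x + D) ^ 2 / 2 := by
    intro α; ring
  apply le_antisymm
  · apply ciSup_le
    intro α
    rw [key α]
    nlinarith [sq_nonneg (α * x + D)]
  · have hbdd : BddAbove (Set.range fun α : ℝ =>
        (νμ - α) * x * D - (α * x) ^ 2 / 2 + E) := by
      refine ⟨D ^ 2 / 2 + νμ * x * D + E, ?_⟩
      rintro _ ⟨α, rfl⟩
      simp only
      rw [key α]
      nlinarith [sq_nonneg (α * x + D)]
    refine le_ciSup_of_le hbdd (-D / x) ?_
    rw [key]
    have : -D / x * x + D = 0 := by field_simp; ring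
    rw [this]
    norm_num


/- STATEMENT 6: If (a, b, c) solves the system (ODE) and U(t,x) = a(t)x² + b(t)x + c(t),
then U solves the continuous HJB equation: for every t ∈ [0,T) and x > 0,
∂ₜU(t,x) + sup_{α ∈ ℝ} [ (ν−μ−α)x·∂ₓU(t,x) − (αx)²/2 + (1/2)xσ²·∂ₓₓU(t,x) ] = 0,
together with the terminal condition U(T,x) = −γ(x−x̃)². -/
theorem stmt6 (ν μ σ γ xt T : ℝ) (hσ : 0 < σ) (hγ : 0 < γ) (hxt : 0 < xt) (hT : 0 < T)
    (a b c a' b' c' : ℝ → ℝ) (U : ℝ → ℝ → ℝ)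
    (hda : ∀ t ∈ Set.Icc (0 : ℝ) T, HasDerivWithinAt a (a' t) (Set.Icc (0 : ℝ) T) t)
    (hodea : ∀ t ∈ Set.Icc (0 : ℝ) T, a' t + 2 * a t * (ν - μ) + 2 * a t ^ 2 = 0)
    (haT : a T = -γ)
    (hdb : ∀ t ∈ Set.Icc (0 : ℝ) T, HasDerivWithinAt b (b' t) (Set.Icc (0 : ℝ) T) t)
    (hodeb : ∀ t ∈ Set.Icc (0 : ℝ) T,
      b' t + 2 * a t * b t + a t * σ ^ 2 + b t * (ν - μ) = 0)
    (hbT : b T = 2 * γ * xt)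
    (hdc : ∀ t ∈ Set.Icc (0 : ℝ) T, HasDerivWithinAt c (c' t) (Set.Icc (0 : ℝ) T) t)
    (hodec : ∀ t ∈ Set.Icc (0 : ℝ) T, c' t + b t ^ 2 / 2 = 0)
    (hcT : c T = -γ * xt ^ 2)
    (hU : ∀ t x : ℝ, U t x = a t * x ^ 2 + b t * x + c t) :
    (∀ t ∈ Set.Ico (0 : ℝ) T, ∀ x : ℝ, 0 < x →
      HasDerivWithinAt (fun s => U s x)
        (-(⨆ α : ℝ, (ν - μ - α) * x * deriv (fun y => U t y) x
            - (α * x) ^ 2 / 2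
            + (1 / 2) * x * σ ^ 2 * deriv (deriv (fun y => U t y)) x))
        (Set.Icc (0 : ℝ) T) t) ∧
    ∀ x : ℝ, U T x = -γ * (x - xt) ^ 2 := by
  constructor
  · intro t ht x hx
    have ht' : t ∈ Set.Icc (0 : ℝ) T := ⟨ht.1, ht.2.le⟩
    have hfun : (fun y => U t y) = fun y => a t * y ^ 2 + b t * y + c t := by
      funext y; exact hU t y
    have hd1 : deriv (fun y => U t y) x = 2 * a t * x + b t := by
      rw [hfun, deriv_quad]
    have hd2 : deriv (deriv (fun y => U t y)) x = 2 * a t := by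
      rw [hfun]; exact deriv2_quad _ _ _ x
    rw [hd1]
    simp only [hd2]
    rw [show (⨆ α : ℝ, (ν - μ - α) * x * (2 * a t * x + b t)
            - (α * x) ^ 2 / 2 + 1 / 2 * x * σ ^ 2 * (2 * a t))
        = (2 * a t * x + b t) ^ 2 / 2 + (ν - μ) * x * (2 * a t * x + b t)
            + 1 / 2 * x * σ ^ 2 * (2 * a t) from
      sup_calc x (2 * a t * x + b t) (1 / 2 * x * σ ^ 2 * (2 * a t)) (ν - μ) hx]
    have hD : HasDerivWithinAt (fun s => a s * x ^ 2 + b s * x + c s)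
        (a' t * x ^ 2 + b' t * x + c' t) (Set.Icc (0 : ℝ) T) t :=
      (((hda t ht').mul_const (x ^ 2)).add ((hdb t ht').mul_const x)).add (hdc t ht')
    have heq : (fun s => U s x) = fun s => a s * x ^ 2 + b s * x + c s := by
      funext s; exact hU s x
    rw [heq]
    convert hD using 1
    have e1 := hodea t ht'
    have e2 := hodeb t ht'
    have e3 := hodec t ht'
    linear_combination (-(x ^ 2)) * e1 + (-x) * e2 + (-1) * e3
  · intro x
    rw [hU, haT, hbT, hcT]
    ring
end

section
/- Let a, b, c : [0,T] → ℝ be differentiable with a′(t) + 2a(t)(ν−μ) + 2a(t)² = 0, a(T) = −γ; b′(t) + 2a(t)b(t) + a(t)σ² + b(t)(ν−μ) = 0, b(T) = 2γ·x̃; c′(t) + b(t)²/2 = 0, c(T) = −γ·x̃². For each integer K ≥ 1 let b_K, c_K : [0,T] → ℝ be differentiable with b_K′(t) − 2a(t)(a(t)/K − b_K(t)) + a(t)(σ² + (μ+ν)/K) + b_K(t)(ν−μ) = 0, b_K(T) = 2γ·x̃, and c_K′(t) + (1/2)(a(t)/K − b_K(t))² = 0, c_K(T) = −γ·x̃². Then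 there exists a constant C ≥ 0, independent of K, such that for every integer K ≥ 1, sup over t ∈ [0,T] of |b_K(t) − b(t)| ≤ C/K and sup over t ∈ [0,T] of |c_K(t) − c(t)| ≤ C/K. In particular (b_K, c_K) converges uniformly on [0,T] to (b, c) as K → ∞. -/
set_option maxHeartbeats 1000000


/- STATEMENT 9: Uniform convergence of (b_K, c_K) to (b, c) at rate C/K (Grönwall). -/
theorem stmt9 (ν μ σ γ xt T : ℝ) (hσ : 0 < σ) (hγ : 0 < γ) (hxt : 0 < xt) (hT : 0 < T)
    (a b c a' b' c' : ℝ → ℝ) (bK cK bK' cK' : ℕ → ℝ → ℝ)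
    -- (a, b, c) solves the continuous system (ODE)
    (hda : ∀ t ∈ Set.Icc (0 : ℝ) T, HasDerivWithinAt a (a' t) (Set.Icc (0 : ℝ) T) t)
    (hodea : ∀ t ∈ Set.Icc (0 : ℝ) T, a' t + 2 * a t * (ν - μ) + 2 * a t ^ 2 = 0)
    (haT : a T = -γ)
    (hdb : ∀ t ∈ Set.Icc (0 : ℝ) T, HasDerivWithinAt b (b' t) (Set.Icc (0 : ℝ) T) t)
    (hodeb : ∀ t ∈ Set.Icc (0 : ℝ) T,
      b' t + 2 * a t * b t + a t * σ ^ 2 + b t * (ν - μ) = 0)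
    (hbT : b T = 2 * γ * xt)
    (hdc : ∀ t ∈ Set.Icc (0 : ℝ) T, HasDerivWithinAt c (c' t) (Set.Icc (0 : ℝ) T) t)
    (hodec : ∀ t ∈ Set.Icc (0 : ℝ) T, c' t + b t ^ 2 / 2 = 0)
    (hcT : c T = -γ * xt ^ 2)
    -- for each K ≥ 1, (a, bK K, cK K) solves the discrete system (ODE)_K
    (hdbK : ∀ K : ℕ, 1 ≤ K → ∀ t ∈ Set.Icc (0 : ℝ) T,
      HasDerivWithinAt (bK K) (bK' K t) (Set.Icc (0 : ℝ) T) t)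
    (hodebK : ∀ K : ℕ, 1 ≤ K → ∀ t ∈ Set.Icc (0 : ℝ) T,
      bK' K t - 2 * a t * (a t / (K : ℝ) - bK K t)
        + a t * (σ ^ 2 + (μ + ν) / (K : ℝ)) + bK K t * (ν - μ) = 0)
    (hbKT : ∀ K : ℕ, 1 ≤ K → bK K T = 2 * γ * xt)
    (hdcK : ∀ K : ℕ, 1 ≤ K → ∀ t ∈ Set.Icc (0 : ℝ) T,
      HasDerivWithinAt (cK K) (cK' K t) (Set.Icc (0 : ℝ) T) t)
    (hodecK : ∀ K : ℕ, 1 ≤ K → ∀ t ∈ Set.Icc (0 : ℝ) T,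
      cK' K t + (1 / 2) * (a t / (K : ℝ) - bK K t) ^ 2 = 0)
    (hcKT : ∀ K : ℕ, 1 ≤ K → cK K T = -γ * xt ^ 2) :
    ∃ C : ℝ, 0 ≤ C ∧ ∀ K : ℕ, 1 ≤ K → ∀ t ∈ Set.Icc (0 : ℝ) T,
      |bK K t - b t| ≤ C / (K : ℝ) ∧ |cK K t - c t| ≤ C / (K : ℝ) := by
  have hIc : IsCompact (Set.Icc (0:ℝ) T) := isCompact_Icc
  have hTI : T ∈ Set.Icc (0:ℝ) T := Set.right_mem_Icc.2 hT.le
  have hca : ContinuousOn a (Set.Icc (0:ℝ) T) := fun t ht => (hda t ht).continuousWithinAt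
  have hcb : ContinuousOn b (Set.Icc (0:ℝ) T) := fun t ht => (hdb t ht).continuousWithinAt
  obtain ⟨A, hA⟩ := hIc.exists_bound_of_continuousOn hca
  obtain ⟨B, hB⟩ := hIc.exists_bound_of_continuousOn hcb
  have hA' : ∀ t ∈ Set.Icc (0:ℝ) T, |a t| ≤ A := fun t ht => hA t ht
  have hB' : ∀ t ∈ Set.Icc (0:ℝ) T, |b t| ≤ B := fun t ht => hB t ht
  have hA0 : 0 ≤ A := le_trans (abs_nonneg _) (hA' T hTI)
  have hB0 : 0 ≤ B := le_trans (abs_nonneg _) (hB' T hTI)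
  set L : ℝ := 2*A + |ν - μ| + 1 with hLdef
  have hL1 : 1 ≤ L := by have := abs_nonneg (ν - μ); simp only [hLdef]; linarith
  have hL0 : 0 < L := lt_of_lt_of_le one_pos hL1
  set M : ℝ := 2*A^2 + A*(|μ| + |ν|) with hMdef
  have hM0 : 0 ≤ M := by positivity
  set C₁ : ℝ := M * Real.exp (L*T) with hC1def
  have hC10 : 0 ≤ C₁ := by positivity
  -- main Grönwall claim for bK - b
  have key : ∀ K : ℕ, 1 ≤ K → ∀ t ∈ Set.Icc (0:ℝ) T, |bK K t - b t| ≤ C₁ / (K:ℝ) := by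
    intro K hK
    have hK1 : (1:ℝ) ≤ (K:ℝ) := by exact_mod_cast hK
    have hK0 : (0:ℝ) < (K:ℝ) := lt_of_lt_of_le one_pos hK1
    have hmap : Set.MapsTo (fun s => T - s) (Set.Icc (0:ℝ) T) (Set.Icc (0:ℝ) T) := by
      intro s hs
      simp only [Set.mem_Icc] at hs ⊢
      constructor <;> linarith [hs.1, hs.2]
    set g : ℝ → ℝ := fun s => bK K (T - s) - b (T - s) with hgdef
    set g' : ℝ → ℝ := fun s => (bK' K (T - s) - b' (T - s)) * (-1) with hg'def
    have hg : ∀ s ∈ Set.Icc (0:ℝ) T, HasDerivWithinAt g (g' s) (Set.Icc (0:ℝ) T) s := by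
      intro s hs
      have h1 : HasDerivWithinAt (fun u => bK K u - b u)
          (bK' K (T - s) - b' (T - s)) (Set.Icc (0:ℝ) T) (T - s) :=
        (hdbK K hK (T - s) (hmap hs)).sub (hdb (T - s) (hmap hs))
      have h2 : HasDerivWithinAt (fun s : ℝ => T - s) (-1) (Set.Icc (0:ℝ) T) s := by
        simpa using (hasDerivWithinAt_id s (Set.Icc (0:ℝ) T)).const_sub T
      exact h1.comp s h2 hmap
    have hgc : ContinuousOn g (Set.Icc (0:ℝ) T) := fun s hs => (hg s hs).continuousWithinAt
    have hg0 : ‖g 0‖ ≤ 0 := by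
      simp [hgdef, hbKT K hK, hbT]
    have hbound : ∀ s ∈ Set.Ico (0:ℝ) T, ‖g' s‖ ≤ L * ‖g s‖ + M / (K:ℝ) := by
      intro s hs
      have hsI : s ∈ Set.Icc (0:ℝ) T := Set.mem_Icc_of_Ico hs
      have huI : T - s ∈ Set.Icc (0:ℝ) T := hmap hsI
      have e1 := hodeb (T - s) huI
      have e2 := hodebK K hK (T - s) huI
      have hid : bK' K (T - s) - b' (T - s) =
          -(2 * a (T - s) + (ν - μ)) * (bK K (T - s) - b (T - s))
            + (2 * (a (T - s))^2 - a (T - s) * (μ + ν)) / (K:ℝ) := by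
        linear_combination e2 - e1
      have hau : |a (T - s)| ≤ A := hA' (T - s) huI
      have h1 : |(-(2 * a (T - s) + (ν - μ))) * (bK K (T - s) - b (T - s))|
          ≤ L * |bK K (T - s) - b (T - s)| := by
        rw [abs_mul]
        apply mul_le_mul_of_nonneg_right _ (abs_nonneg _)
        calc |(-(2 * a (T - s) + (ν - μ)))| = |2 * a (T - s) + (ν - μ)| := abs_neg _
          _ ≤ |2 * a (T - s)| + |ν - μ| := abs_add_le _ _
          _ = 2 * |a (T - s)| + |ν - μ| := by rw [abs_mul]; norm_num
          _ ≤ L := by simp only [hLdef]; linarith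
      have h2 : |(2 * (a (T - s))^2 - a (T - s) * (μ + ν)) / (K:ℝ)| ≤ M / (K:ℝ) := by
        rw [abs_div, abs_of_pos hK0]
        have h3 : |a (T - s) * (μ + ν)| ≤ A * (|μ| + |ν|) := by
          rw [abs_mul]
          exact mul_le_mul hau (abs_add_le μ ν) (abs_nonneg _) hA0
        have h4 : (a (T - s))^2 ≤ A^2 := by
          nlinarith [abs_nonneg (a (T - s)), sq_abs (a (T - s))]
        have h5 : |2 * (a (T - s))^2 - a (T - s) * (μ + ν)| ≤ M := by
          calc |2 * (a (T - s))^2 - a (T - s) * (μ + ν)|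
              ≤ |2 * (a (T - s))^2| + |a (T - s) * (μ + ν)| := abs_sub _ _
            _ = 2 * (a (T - s))^2 + |a (T - s) * (μ + ν)| := by
                rw [abs_of_nonneg (by positivity)]
            _ ≤ M := by simp only [hMdef]; linarith
        gcongr
      show ‖(bK' K (T - s) - b' (T - s)) * (-1)‖ ≤ L * ‖g s‖ + M / (K:ℝ)
      rw [Real.norm_eq_abs, abs_mul, abs_neg, abs_one, mul_one, hid]
      calc |(-(2 * a (T - s) + (ν - μ))) * (bK K (T - s) - b (T - s))
            + (2 * (a (T - s))^2 - a (T - s) * (μ + ν)) / (K:ℝ)|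
          ≤ |(-(2 * a (T - s) + (ν - μ))) * (bK K (T - s) - b (T - s))|
            + |(2 * (a (T - s))^2 - a (T - s) * (μ + ν)) / (K:ℝ)| := abs_add_le _ _
        _ ≤ L * |bK K (T - s) - b (T - s)| + M / (K:ℝ) := add_le_add h1 h2
        _ = L * ‖g s‖ + M / (K:ℝ) := by rw [hgdef]; simp [Real.norm_eq_abs]
    have hIci : ∀ x ∈ Set.Ico (0:ℝ) T, HasDerivWithinAt g (g' x) (Set.Ici x) x :=
      fun x hx => (hg x (Set.mem_Icc_of_Ico hx)).mono_of_mem_nhdsWithin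
        (Icc_mem_nhdsGE_of_mem hx)
    have hG := norm_le_gronwallBound_of_norm_deriv_right_le hgc hIci hg0 hbound
    intro t ht
    have hsI : T - t ∈ Set.Icc (0:ℝ) T := hmap ht
    have hGt := hG (T - t) hsI
    rw [gronwallBound_of_K_ne_0 hL0.ne'] at hGt
    have hgt : g (T - t) = bK K t - b t := by
      simp only [hgdef, sub_sub_cancel]
    rw [Real.norm_eq_abs, hgt] at hGt
    have hexp1 : (1:ℝ) ≤ Real.exp (L * (T - t - 0)) := by
      rw [← Real.exp_zero]
      apply Real.exp_le_exp.2
      have := ht.2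
      nlinarith [ht.1, ht.2, hL0]
    have hexp2 : Real.exp (L * (T - t - 0)) ≤ Real.exp (L * T) := by
      apply Real.exp_le_exp.2
      nlinarith [ht.1, hL0]
    have hMK : 0 ≤ M / (K:ℝ) := div_nonneg hM0 hK0.le
    have hML : M / (K:ℝ) / L ≤ M / (K:ℝ) := div_le_self hMK hL1
    calc |bK K t - b t|
        ≤ 0 * Real.exp (L * (T - t - 0))
          + M / (K:ℝ) / L * (Real.exp (L * (T - t - 0)) - 1) := hGt
      _ ≤ M / (K:ℝ) * Real.exp (L * T) := by
          have h6 : M / (K:ℝ) / L * (Real.exp (L * (T - t - 0)) - 1)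
              ≤ M / (K:ℝ) * (Real.exp (L * (T - t - 0)) - 1) :=
            mul_le_mul_of_nonneg_right hML (by linarith)
          have h7 : M / (K:ℝ) * (Real.exp (L * (T - t - 0)) - 1)
              ≤ M / (K:ℝ) * Real.exp (L * T) :=
            mul_le_mul_of_nonneg_left (by linarith) hMK
          linarith
      _ = C₁ / (K:ℝ) := by rw [hC1def]; ring
  -- the cK - c part
  set C₂ : ℝ := (C₁ + A) * (2*B + C₁ + A) / 2 with hC2def
  have hC20 : 0 ≤ C₂ := by positivity
  refine ⟨C₁ + C₂ * T, by positivity, ?_⟩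
  intro K hK t ht
  have hK1 : (1:ℝ) ≤ (K:ℝ) := by exact_mod_cast hK
  have hK0 : (0:ℝ) < (K:ℝ) := lt_of_lt_of_le one_pos hK1
  constructor
  · refine (key K hK t ht).trans ?_
    gcongr
    nlinarith [mul_nonneg hC20 hT.le]
  · -- derivative bound for cK - c
    have hbnd : ∀ u ∈ Set.Icc (0:ℝ) T, ‖cK' K u - c' u‖ ≤ C₂ / (K:ℝ) := by
      intro u hu
      have hid2 : cK' K u - c' u =
          (b u + bK K u - a u / (K:ℝ)) * (b u - bK K u + a u / (K:ℝ)) / 2 := by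
        linear_combination (hodecK K hK u hu) - (hodec u hu)
      have hy : |bK K u - b u| ≤ C₁ / (K:ℝ) := key K hK u hu
      have hx : |b u| ≤ B := hB' u hu
      have hz : |a u| ≤ A := hA' u hu
      have hzK : |a u / (K:ℝ)| ≤ A / (K:ℝ) := by
        rw [abs_div, abs_of_pos hK0]; gcongr
      have hAK : A / (K:ℝ) ≤ A := div_le_self hA0 hK1
      have hC1K : C₁ / (K:ℝ) ≤ C₁ := div_le_self hC10 hK1
      have hf2 : |b u - bK K u + a u / (K:ℝ)| ≤ (C₁ + A) / (K:ℝ) := by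
        calc |b u - bK K u + a u / (K:ℝ)| ≤ |b u - bK K u| + |a u / (K:ℝ)| := abs_add_le _ _
          _ = |bK K u - b u| + |a u / (K:ℝ)| := by rw [abs_sub_comm]
          _ ≤ C₁ / (K:ℝ) + A / (K:ℝ) := add_le_add hy hzK
          _ = (C₁ + A) / (K:ℝ) := by ring
      have hbKu : |bK K u| ≤ B + C₁ := by
        calc |bK K u| = |b u + (bK K u - b u)| := by ring_nf
          _ ≤ |b u| + |bK K u - b u| := abs_add_le _ _
          _ ≤ B + C₁ := by linarith
      have hf1 : |b u + bK K u - a u / (K:ℝ)| ≤ 2*B + C₁ + A := by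
        calc |b u + bK K u - a u / (K:ℝ)|
            ≤ |b u + bK K u| + |a u / (K:ℝ)| := abs_sub _ _
          _ ≤ |b u| + |bK K u| + |a u / (K:ℝ)| := by
              linarith [abs_add_le (b u) (bK K u)]
          _ ≤ 2*B + C₁ + A := by linarith
      rw [Real.norm_eq_abs, hid2, abs_div, abs_mul]
      have h8 : |b u + bK K u - a u / (K:ℝ)| * |b u - bK K u + a u / (K:ℝ)|
          ≤ (2*B + C₁ + A) * ((C₁ + A) / (K:ℝ)) :=
        mul_le_mul hf1 hf2 (abs_nonneg _) (by positivity)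
      have h9 : |(2:ℝ)| = 2 := by norm_num
      rw [h9]
      rw [hC2def]
      rw [div_le_div_iff₀ (by norm_num) (by positivity)]
      calc |b u + bK K u - a u / (K:ℝ)| * |b u - bK K u + a u / (K:ℝ)| * (K:ℝ)
          ≤ (2*B + C₁ + A) * ((C₁ + A) / (K:ℝ)) * (K:ℝ) := by
            apply mul_le_mul_of_nonneg_right h8 hK0.le
        _ = (C₁ + A) * (2*B + C₁ + A) / 2 * 2 := by field_simp
    have hmvt := Convex.norm_image_sub_le_of_norm_hasDerivWithin_le
      (f := fun u => cK K u - c u) (f' := fun u => cK' K u - c' u)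
      (fun u hu => (hdcK K hK u hu).sub (hdc u hu)) hbnd (convex_Icc 0 T) hTI ht
    have hT0 : cK K T - c T = 0 := by rw [hcKT K hK, hcT]; ring
    rw [Real.norm_eq_abs, Real.norm_eq_abs] at hmvt
    have htT : |t - T| ≤ T := by
      rw [abs_le]; constructor <;> linarith [ht.1, ht.2]
    calc |cK K t - c t| = |(cK K t - c t) - (cK K T - c T)| := by rw [hT0]; ring_nf
      _ ≤ C₂ / (K:ℝ) * |t - T| := hmvt
      _ ≤ C₂ / (K:ℝ) * T := by
          apply mul_le_mul_of_nonneg_left htT (by positivity)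
      _ ≤ (C₁ + C₂ * T) / (K:ℝ) := by
          rw [div_mul_eq_mul_div]
          gcongr
          nlinarith [mul_nonneg hC20 hT.le]
end

section
/- As K → ∞ (along the integers K ≥ 1), K·(1 − γ_K) converges to (ν−μ)/(2a) and K²·φ_K/ν_K converges to ((ν−μ)² − 4aβ₁)/(4a²). In particular, since (ν−μ)² > 4aβ₁, one has φ_K > 0 for all sufficiently large K. -/
open Filter Topology

/- STATEMENT 10: With ν_K = ν + aK, μ_K = μ + aK, γ_K = (ν_K + μ_K − β₁/K)/(2ν_K),
φ_K = ν_K γ_K² − μ_K, one has K(1 − γ_K) → (ν−μ)/(2a) and K²φ_K/ν_K →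
((ν−μ)² − 4aβ₁)/(4a²) as K → ∞; in particular φ_K > 0 for all sufficiently large K. -/
theorem stmt10 (ν μ a β₁ β₂ : ℝ) (hνμ : μ < ν) (hμ : 0 ≤ μ) (ha : 0 < a)
    (hβ₁ : 0 ≤ β₁) (hβ₂ : 0 ≤ β₂) (hdisc : 4 * a * β₁ < (ν - μ) ^ 2)
    (νK μK γK φK : ℕ → ℝ)
    (hνK : ∀ K : ℕ, νK K = ν + a * K)
    (hμK : ∀ K : ℕ, μK K = μ + a * K)
    (hγK : ∀ K : ℕ, γK K = (νK K + μK K - β₁ / K) / (2 * νK K))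
    (hφK : ∀ K : ℕ, φK K = νK K * (γK K) ^ 2 - μK K) :
    Tendsto (fun K : ℕ => (K : ℝ) * (1 - γK K)) atTop (𝓝 ((ν - μ) / (2 * a))) ∧
    Tendsto (fun K : ℕ => (K : ℝ) ^ 2 * φK K / νK K) atTop
      (𝓝 (((ν - μ) ^ 2 - 4 * a * β₁) / (4 * a ^ 2))) ∧
    ∀ᶠ K : ℕ in atTop, 0 < φK K := by
  have hν : 0 < ν := lt_of_le_of_lt hμ hνμ
  have hνKpos : ∀ K : ℕ, 0 < νK K := by
    intro K
    rw [hνK]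
    positivity
  -- basic limits
  have h0 : ∀ c : ℝ, Tendsto (fun K : ℕ => c / K) atTop (𝓝 0) :=
    fun c => tendsto_const_div_atTop_nhds_zero_nat c
  -- Part 1
  have e1 : ∀ᶠ K : ℕ in atTop, ((ν - μ) + β₁ / K) / (2 * (ν / K + a))
      = (K : ℝ) * (1 - γK K) := by
    filter_upwards [eventually_ge_atTop 1] with K hK
    have hK0 : (K : ℝ) ≠ 0 := by positivity
    have hνK0 : νK K ≠ 0 := ne_of_gt (hνKpos K)
    rw [hγK, hνK, hμK]
    rw [hνK] at hνK0
    field_simp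
    ring
  have t1 : Tendsto (fun K : ℕ => ((ν - μ) + β₁ / K) / (2 * (ν / K + a)))
      atTop (𝓝 (((ν - μ) + 0) / (2 * (0 + a)))) := by
    apply Tendsto.div
    · exact tendsto_const_nhds.add (h0 β₁)
    · exact tendsto_const_nhds.mul ((h0 ν).add tendsto_const_nhds)
    · simp [ne_of_gt ha]
  have goal1 : Tendsto (fun K : ℕ => (K : ℝ) * (1 - γK K)) atTop
      (𝓝 ((ν - μ) / (2 * a))) := by
    have : ((ν - μ) + 0) / (2 * (0 + a)) = (ν - μ) / (2 * a) := by ring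
    rw [this] at t1
    exact t1.congr' e1
  -- Part 2
  have e2 : ∀ᶠ K : ℕ in atTop,
      ((ν - μ) ^ 2 - 2 * β₁ * (ν + μ) / K - 4 * a * β₁ + (β₁ / K) ^ 2)
        / (4 * (ν / K + a) ^ 2)
      = (K : ℝ) ^ 2 * φK K / νK K := by
    filter_upwards [eventually_ge_atTop 1] with K hK
    have hK0 : (K : ℝ) ≠ 0 := by positivity
    have hνK0 : νK K ≠ 0 := ne_of_gt (hνKpos K)
    rw [hφK, hγK, hνK, hμK]
    rw [hνK] at hνK0
    field_simp
    ring
  have t2 : Tendsto (fun K : ℕ =>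
      ((ν - μ) ^ 2 - 2 * β₁ * (ν + μ) / K - 4 * a * β₁ + (β₁ / K) ^ 2)
        / (4 * (ν / K + a) ^ 2)) atTop
      (𝓝 (((ν - μ) ^ 2 - 0 - 4 * a * β₁ + 0 ^ 2) / (4 * (0 + a) ^ 2))) := by
    apply Tendsto.div
    · exact ((tendsto_const_nhds.sub (h0 (2 * β₁ * (ν + μ)))).sub
        tendsto_const_nhds).add ((h0 β₁).pow 2)
    · exact tendsto_const_nhds.mul (((h0 ν).add tendsto_const_nhds).pow 2)
    · positivity
  have goal2 : Tendsto (fun K : ℕ => (K : ℝ) ^ 2 * φK K / νK K) atTop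
      (𝓝 (((ν - μ) ^ 2 - 4 * a * β₁) / (4 * a ^ 2))) := by
    have : ((ν - μ) ^ 2 - 0 - 4 * a * β₁ + 0 ^ 2) / (4 * (0 + a) ^ 2)
        = ((ν - μ) ^ 2 - 4 * a * β₁) / (4 * a ^ 2) := by ring
    rw [this] at t2
    exact t2.congr' e2
  refine ⟨goal1, goal2, ?_⟩
  have hL : 0 < ((ν - μ) ^ 2 - 4 * a * β₁) / (4 * a ^ 2) := by
    apply div_pos (by linarith) (by positivity)
  have hev : ∀ᶠ K : ℕ in atTop, 0 < (K : ℝ) ^ 2 * φK K / νK K :=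
    goal2.eventually (eventually_gt_nhds hL)
  filter_upwards [hev, eventually_ge_atTop 1] with K h1 hK
  have hK0 : (0:ℝ) < (K : ℝ) := by positivity
  have hνp := hνKpos K
  have hnum : 0 < (K : ℝ) ^ 2 * φK K := by
    rcases div_pos_iff.mp h1 with ⟨h, _⟩ | ⟨_, h⟩
    · exact h
    · linarith
  nlinarith [sq_nonneg (K : ℝ)]
end

section
/- As K → ∞ (along the integers K ≥ 1), √(ν_K·φ_K) converges to η := √((ν−μ)² − 4aβ₁)/2, and Λ_K := √(ν_K/φ_K)·(exp(β₂/K) − γ_K) (defined for the sufficiently large K for which φ_K > 0) converges to Λ_∞ := ((ν−μ)/(2a) + β₂)·2a/√((ν−μ)² − 4aβ₁). -/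
open Filter Topology

/- STATEMENT 11: √(ν_K φ_K) → η := √((ν−μ)² − 4aβ₁)/2 and
Λ_K := √(ν_K/φ_K)(exp(β₂/K) − γ_K) → Λ_∞ := ((ν−μ)/(2a) + β₂)·2a/√((ν−μ)² − 4aβ₁). -/
theorem stmt11 (ν μ a β₁ β₂ : ℝ) (hνμ : μ < ν) (hμ : 0 ≤ μ) (ha : 0 < a)
    (hβ₁ : 0 ≤ β₁) (hβ₂ : 0 ≤ β₂) (hdisc : 4 * a * β₁ < (ν - μ) ^ 2)
    (νK μK γK φK ΛK : ℕ → ℝ)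
    (hνK : ∀ K : ℕ, νK K = ν + a * K)
    (hμK : ∀ K : ℕ, μK K = μ + a * K)
    (hγK : ∀ K : ℕ, γK K = (νK K + μK K - β₁ / K) / (2 * νK K))
    (hφK : ∀ K : ℕ, φK K = νK K * (γK K) ^ 2 - μK K)
    (hΛK : ∀ K : ℕ, ΛK K = Real.sqrt (νK K / φK K) * (Real.exp (β₂ / K) - γK K)) :
    Tendsto (fun K : ℕ => Real.sqrt (νK K * φK K)) atTop
      (𝓝 (Real.sqrt ((ν - μ) ^ 2 - 4 * a * β₁) / 2)) ∧
    Tendsto ΛK atTop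
      (𝓝 (((ν - μ) / (2 * a) + β₂) * (2 * a) / Real.sqrt ((ν - μ) ^ 2 - 4 * a * β₁))) := by
  have hν : 0 < ν := lt_of_le_of_lt hμ hνμ
  have hd : 0 < (ν - μ) ^ 2 - 4 * a * β₁ := by linarith
  have hsd : 0 < Real.sqrt ((ν - μ) ^ 2 - 4 * a * β₁) := Real.sqrt_pos.2 hd
  have hνKpos : ∀ K : ℕ, 0 < νK K := by
    intro K; rw [hνK]; positivity
  have h1K : Tendsto (fun K : ℕ => ((K : ℝ))⁻¹) atTop (𝓝 0) :=
    tendsto_inv_atTop_zero.comp tendsto_natCast_atTop_atTop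
  -- algebraic identity for νK * φK
  have key : ∀ K : ℕ, 1 ≤ K → νK K * φK K =
      ((ν - μ) ^ 2 - 4 * a * β₁ - 2 * β₁ * (ν + μ) * ((K : ℝ))⁻¹ + β₁ ^ 2 * ((K : ℝ))⁻¹ ^ 2) / 4 := by
    intro K hK
    have hK0 : (0 : ℝ) < K := by exact_mod_cast hK
    have hνK0 : (0:ℝ) < ν + a * K := by positivity
    rw [hφK, hγK, hνK, hμK]
    field_simp
    ring
  have hf : Tendsto (fun K : ℕ => νK K * φK K) atTop
      (𝓝 (((ν - μ) ^ 2 - 4 * a * β₁) / 4)) := by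
    have h2 : Tendsto (fun K : ℕ =>
        ((ν - μ) ^ 2 - 4 * a * β₁ - 2 * β₁ * (ν + μ) * ((K : ℝ))⁻¹ + β₁ ^ 2 * ((K : ℝ))⁻¹ ^ 2) / 4)
        atTop (𝓝 (((ν - μ) ^ 2 - 4 * a * β₁) / 4)) := by
      have h3 : Tendsto (fun K : ℕ =>
          ((ν - μ) ^ 2 - 4 * a * β₁ - 2 * β₁ * (ν + μ) * ((K : ℝ))⁻¹ +
            β₁ ^ 2 * ((K : ℝ))⁻¹ ^ 2) / 4) atTop
          (𝓝 (((ν - μ) ^ 2 - 4 * a * β₁ - 2 * β₁ * (ν + μ) * 0 + β₁ ^ 2 * 0 ^ 2) / 4)) :=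
        (((tendsto_const_nhds (x := (ν - μ) ^ 2 - 4 * a * β₁)).sub
          (h1K.const_mul (2 * β₁ * (ν + μ)))).add
          ((h1K.pow 2).const_mul (β₁ ^ 2))).div_const (4 : ℝ)
      convert h3 using 2
      ring
    exact h2.congr' (by filter_upwards [eventually_ge_atTop 1] with K hK using (key K hK).symm)
  have hsqrtf : Tendsto (fun K : ℕ => Real.sqrt (νK K * φK K)) atTop
      (𝓝 (Real.sqrt ((ν - μ) ^ 2 - 4 * a * β₁) / 2)) := by
    have h4 := hf.sqrt
    rwa [Real.sqrt_div hd.le, show Real.sqrt 4 = 2 by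
      rw [show (4 : ℝ) = 2 ^ 2 by norm_num, Real.sqrt_sq (by norm_num)]] at h4
  refine ⟨hsqrtf, ?_⟩
  -- limit of K * (exp (β₂/K) - 1)
  have hexp : Tendsto (fun K : ℕ => (K : ℝ) * (Real.exp (β₂ / K) - 1)) atTop (𝓝 β₂) := by
    rcases eq_or_lt_of_le hβ₂ with h0 | h0
    · simp [← h0]
    · have hslope : Tendsto (fun x : ℝ => (Real.exp x - 1) / x) (𝓝[≠] 0) (𝓝 1) := by
        have h := Real.hasDerivAt_exp 0
        rw [hasDerivAt_iff_tendsto_slope] at h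
        rw [Real.exp_zero] at h
        refine h.congr fun x => ?_
        simp [slope_def_field]
      have harg : Tendsto (fun K : ℕ => β₂ / (K : ℝ)) atTop (𝓝[≠] 0) := by
        rw [tendsto_nhdsWithin_iff]
        constructor
        · simpa [div_eq_mul_inv] using h1K.const_mul β₂
        · filter_upwards [eventually_ge_atTop 1] with K hK
          have hK0 : (0 : ℝ) < K := by exact_mod_cast hK
          exact (div_pos h0 hK0).ne'
      have hcomp := (hslope.comp harg).const_mul β₂
      rw [mul_one] at hcomp
      refine hcomp.congr' ?_
      filter_upwards [eventually_ge_atTop 1] with K hK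
      have hK0 : (0 : ℝ) < K := by exact_mod_cast hK
      simp only [Function.comp]
      field_simp
  have hexp0 : Tendsto (fun K : ℕ => Real.exp (β₂ / (K : ℝ)) - 1) atTop (𝓝 0) := by
    have h5 : Tendsto (fun K : ℕ => β₂ / (K : ℝ)) atTop (𝓝 0) := by
      simpa [div_eq_mul_inv] using h1K.const_mul β₂
    have h6 := (Real.continuous_exp.tendsto 0).comp h5
    rw [Real.exp_zero] at h6
    simpa using h6.sub_const 1
  -- numerator limit
  have hg : Tendsto (fun K : ℕ => νK K * (Real.exp (β₂ / K) - γK K)) atTop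
      (𝓝 (a * β₂ + (ν - μ) / 2)) := by
    have h7 : Tendsto (fun K : ℕ =>
        ν * (Real.exp (β₂ / (K : ℝ)) - 1) + a * ((K : ℝ) * (Real.exp (β₂ / K) - 1)) +
          (ν - μ + β₁ * ((K : ℝ))⁻¹) / 2) atTop (𝓝 (a * β₂ + (ν - μ) / 2)) := by
      have h8 : Tendsto (fun K : ℕ =>
          ν * (Real.exp (β₂ / (K : ℝ)) - 1) + a * ((K : ℝ) * (Real.exp (β₂ / K) - 1)) +
            (ν - μ + β₁ * ((K : ℝ))⁻¹) / 2) atTop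
          (𝓝 (ν * 0 + a * β₂ + (ν - μ + β₁ * 0) / 2)) :=
        ((hexp0.const_mul ν).add (hexp.const_mul a)).add
          (((tendsto_const_nhds (x := ν - μ)).add (h1K.const_mul β₁)).div_const 2)
      convert h8 using 2
      ring
    refine h7.congr' ?_
    filter_upwards [eventually_ge_atTop 1] with K hK
    have hK0 : (0 : ℝ) < K := by exact_mod_cast hK
    have hνK0 : (0:ℝ) < ν + a * K := by positivity
    rw [hγK, hνK, hμK]
    field_simp
    ring
  -- eventual positivity of φK
  have hφpos : ∀ᶠ K in atTop, 0 < φK K := by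
    filter_upwards [hf.eventually (eventually_gt_nhds
      (by positivity : (0:ℝ) < ((ν - μ) ^ 2 - 4 * a * β₁) / 4))] with K hK
    nlinarith [hνKpos K]
  -- rewrite ΛK
  have hΛeq : ∀ᶠ K in atTop,
      νK K * (Real.exp (β₂ / K) - γK K) / Real.sqrt (νK K * φK K) = ΛK K := by
    filter_upwards [hφpos] with K hφ
    rw [hΛK, Real.sqrt_div (hνKpos K).le, Real.sqrt_mul (hνKpos K).le]
    have hs1 : 0 < Real.sqrt (νK K) := Real.sqrt_pos.2 (hνKpos K)
    have hs2 : 0 < Real.sqrt (φK K) := Real.sqrt_pos.2 hφ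
    have hmul : Real.sqrt (νK K) * Real.sqrt (νK K) = νK K :=
      Real.mul_self_sqrt (hνKpos K).le
    rw [div_eq_iff (by positivity : Real.sqrt (νK K) * Real.sqrt (φK K) ≠ 0)]
    rw [div_mul_eq_mul_div, div_mul_eq_mul_div]
    rw [eq_div_iff hs2.ne']
    linear_combination (-(Real.exp (β₂ / ↑K) - γK K) * Real.sqrt (φK K)) * hmul
  have hden : Real.sqrt ((ν - μ) ^ 2 - 4 * a * β₁) / 2 ≠ 0 := by positivity
  have hΛ := (hg.div hsqrtf hden).congr' hΛeq
  have hval : (a * β₂ + (ν - μ) / 2) / (Real.sqrt ((ν - μ) ^ 2 - 4 * a * β₁) / 2) =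
      ((ν - μ) / (2 * a) + β₂) * (2 * a) / Real.sqrt ((ν - μ) ^ 2 - 4 * a * β₁) := by
    field_simp
    ring
  rwa [hval] at hΛ
end

section
/- Assume moreover Λ_∞ > 1, where Λ_∞ := ((ν−μ)/(2a) + β₂)·2a/√((ν−μ)² − 4aβ₁). For K sufficiently large one has φ_K > 0 and Λ_K > 1, where Λ_K := √(ν_K/φ_K)·(exp(β₂/K) − γ_K), and, setting α_K := log((Λ_K − 1)/(Λ_K + 1)) and t*_K := −α_K/(2√(ν_K·φ_K)), one has, as K → ∞: α_K converges to α_∞ := log((Λ_∞ − 1)/(Λ_∞ + 1)) and t*_K converges to t*_∞ := −α_∞/(2η), where η := √((ν−μ)² − 4aβ₁)/2. -/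
open Filter Topology

/- STATEMENT 12: Assuming Λ_∞ > 1: for sufficiently large K one has φ_K > 0 and Λ_K > 1,
and with α_K := log((Λ_K−1)/(Λ_K+1)), t*_K := −α_K/(2√(ν_K φ_K)), one has
α_K → α_∞ := log((Λ_∞−1)/(Λ_∞+1)) and t*_K → t*_∞ := −α_∞/(2η), η := √((ν−μ)²−4aβ₁)/2. -/
theorem stmt12 (ν μ a β₁ β₂ : ℝ) (hνμ : μ < ν) (hμ : 0 ≤ μ) (ha : 0 < a)
    (hβ₁ : 0 ≤ β₁) (hβ₂ : 0 ≤ β₂) (hdisc : 4 * a * β₁ < (ν - μ) ^ 2)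
    (η Λinf αinf tinf : ℝ)
    (hη : η = Real.sqrt ((ν - μ) ^ 2 - 4 * a * β₁) / 2)
    (hΛinf : Λinf = ((ν - μ) / (2 * a) + β₂) * (2 * a) / Real.sqrt ((ν - μ) ^ 2 - 4 * a * β₁))
    (hΛinf1 : 1 < Λinf)
    (hαinf : αinf = Real.log ((Λinf - 1) / (Λinf + 1)))
    (htinf : tinf = -αinf / (2 * η))
    (νK μK γK φK ΛK αK tK : ℕ → ℝ)
    (hνK : ∀ K : ℕ, νK K = ν + a * K)
    (hμK : ∀ K : ℕ, μK K = μ + a * K)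
    (hγK : ∀ K : ℕ, γK K = (νK K + μK K - β₁ / K) / (2 * νK K))
    (hφK : ∀ K : ℕ, φK K = νK K * (γK K) ^ 2 - μK K)
    (hΛK : ∀ K : ℕ, ΛK K = Real.sqrt (νK K / φK K) * (Real.exp (β₂ / K) - γK K))
    (hαK : ∀ K : ℕ, αK K = Real.log ((ΛK K - 1) / (ΛK K + 1)))
    (htK : ∀ K : ℕ, tK K = -αK K / (2 * Real.sqrt (νK K * φK K))) :
    (∀ᶠ K : ℕ in atTop, 0 < φK K ∧ 1 < ΛK K) ∧
    Tendsto αK atTop (𝓝 αinf) ∧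
    Tendsto tK atTop (𝓝 tinf) := by
  have hν : 0 < ν := lt_of_le_of_lt hμ hνμ
  set D : ℝ := (ν - μ) ^ 2 - 4 * a * β₁ with hD
  have hDpos : 0 < D := by simp only [hD]; linarith
  have hsqD : 0 < Real.sqrt D := Real.sqrt_pos.mpr hDpos
  set f : ℕ → ℝ := fun K => (ν - μ) ^ 2 - 2 * β₁ * (ν + μ) / K - 4 * a * β₁ + β₁ ^ 2 / (K:ℝ) ^ 2
    with hf
  have hνKpos : ∀ K : ℕ, 0 < νK K := by
    intro K
    rw [hνK]
    have : (0:ℝ) ≤ a * K := by positivity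
    linarith
  -- basic limits
  have hKlim : Tendsto (fun K : ℕ => (K:ℝ)) atTop atTop := tendsto_natCast_atTop_atTop
  have hinv : Tendsto (fun K : ℕ => (K:ℝ)⁻¹) atTop (𝓝 0) := hKlim.inv_tendsto_atTop
  have hfD : Tendsto f atTop (𝓝 D) := by
    have h1 : Tendsto (fun K : ℕ => 2 * β₁ * (ν + μ) / (K:ℝ)) atTop (𝓝 0) := by
      simpa [div_eq_mul_inv] using hinv.const_mul (2 * β₁ * (ν + μ))
    have h2 : Tendsto (fun K : ℕ => β₁ ^ 2 / (K:ℝ) ^ 2) atTop (𝓝 0) := by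
      have := (hinv.mul hinv).const_mul (β₁ ^ 2)
      simpa [div_eq_mul_inv, mul_inv, sq, mul_assoc] using this
    have := ((tendsto_const_nhds (x := D) (f := atTop (α := ℕ))).sub h1).add h2
    rw [sub_zero, add_zero] at this
    exact this.congr (fun K => by simp only [hf, hD]; ring)
  -- φ identity
  have hφid : ∀ K : ℕ, 1 ≤ K → φK K = f K / (4 * νK K) := by
    intro K hK1
    have hK0 : (0:ℝ) < K := by exact_mod_cast hK1
    have hKne : (K:ℝ) ≠ 0 := ne_of_gt hK0
    have hνne : νK K ≠ 0 := ne_of_gt (hνKpos K)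
    rw [hφK, hγK, hf]
    have hν' : νK K = ν + a * K := hνK K
    have hμ' : μK K = μ + a * K := hμK K
    field_simp
    rw [hν', hμ']
    ring
  -- eventually φ > 0 and f > 0
  have hfev : ∀ᶠ K : ℕ in atTop, 0 < f K := hfD.eventually (eventually_gt_nhds hDpos)
  have hφev : ∀ᶠ K : ℕ in atTop, 0 < φK K := by
    filter_upwards [hfev, eventually_ge_atTop 1] with K hfK hK1
    rw [hφid K hK1]
    exact div_pos hfK (by have := hνKpos K; linarith)
  -- Λ identity
  have hΛid : ∀ K : ℕ, 1 ≤ K → 0 < f K →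
      ΛK K = (2 * νK K * (Real.exp (β₂ / K) - 1) + (ν - μ + β₁ / K)) / Real.sqrt (f K) := by
    intro K hK1 hfK
    have hK0 : (0:ℝ) < K := by exact_mod_cast hK1
    have hKne : (K:ℝ) ≠ 0 := ne_of_gt hK0
    have hνp := hνKpos K
    have hνne : νK K ≠ 0 := ne_of_gt hνp
    have hsf : 0 < Real.sqrt (f K) := Real.sqrt_pos.mpr hfK
    rw [hΛK, hφid K hK1]
    have h1 : νK K / (f K / (4 * νK K)) = (2 * νK K) ^ 2 / f K := by
      field_simp; ring
    rw [h1, Real.sqrt_div (by positivity) (f K), Real.sqrt_sq (by positivity)]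
    rw [hγK]
    have hν' : νK K = ν + a * K := hνK K
    have hμ' : μK K = μ + a * K := hμK K
    field_simp
    rw [hν', hμ']
    ring
  -- sqrt(νK φK) identity
  have hsqid : ∀ K : ℕ, 1 ≤ K → 0 < f K → 2 * Real.sqrt (νK K * φK K) = Real.sqrt (f K) := by
    intro K hK1 hfK
    have hνne : νK K ≠ 0 := ne_of_gt (hνKpos K)
    have : νK K * φK K = f K / 4 := by
      rw [hφid K hK1]; field_simp
    rw [this, show f K / 4 = f K / 2 ^ 2 by norm_num,
      Real.sqrt_div hfK.le, Real.sqrt_sq (by norm_num : (0:ℝ) ≤ 2)]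
    ring
  -- exp slope limit
  have hexpslope : Tendsto (fun K : ℕ => (K:ℝ) * (Real.exp (β₂ / (K:ℝ)) - 1)) atTop (𝓝 β₂) := by
    rcases eq_or_lt_of_le hβ₂ with h0 | h0
    · simp [← h0]
    · have hinv' : Tendsto (fun K : ℕ => β₂ / (K:ℝ)) atTop (𝓝[>] 0) := by
        apply tendsto_nhdsWithin_of_tendsto_nhds_of_eventually_within
        · simpa [div_eq_mul_inv] using hinv.const_mul β₂
        · filter_upwards [eventually_gt_atTop 0] with K hKpos
          have hK0 : (0:ℝ) < K := by exact_mod_cast hKpos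
          exact div_pos h0 hK0
      have hd : Tendsto (fun y : ℝ => y⁻¹ * (Real.exp y - 1)) (𝓝[>] 0) (𝓝 1) := by
        have := (Real.hasDerivAt_exp 0).tendsto_slope_zero_right
        simpa [slope, Real.exp_zero] using this
      have := (hd.comp hinv').const_mul β₂
      rw [mul_one] at this
      apply this.congr'
      filter_upwards [eventually_gt_atTop 0] with K hKpos
      have hne : (K:ℝ) ≠ 0 := by positivity
      have hβne : β₂ ≠ 0 := ne_of_gt h0
      simp only [Function.comp]
      field_simp
  have hexp1 : Tendsto (fun K : ℕ => Real.exp (β₂ / (K:ℝ))) atTop (𝓝 1) := by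
    have h : Tendsto (fun K : ℕ => β₂ / (K:ℝ)) atTop (𝓝 0) := by
      simpa [div_eq_mul_inv] using hinv.const_mul β₂
    simpa [Real.exp_zero, Function.comp_def] using (Real.continuous_exp.tendsto 0).comp h
  -- numerator limit
  have hN : Tendsto (fun K : ℕ => 2 * νK K * (Real.exp (β₂ / (K:ℝ)) - 1) + (ν - μ + β₁ / K))
      atTop (𝓝 (ν - μ + 2 * a * β₂)) := by
    have h1 : Tendsto (fun K : ℕ => 2 * ν * (Real.exp (β₂ / (K:ℝ)) - 1)) atTop (𝓝 0) := by
      have := (hexp1.sub (tendsto_const_nhds (x := (1:ℝ)))).const_mul (2 * ν)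
      simpa using this
    have h2 : Tendsto (fun K : ℕ => 2 * a * ((K:ℝ) * (Real.exp (β₂ / (K:ℝ)) - 1)))
        atTop (𝓝 (2 * a * β₂)) := hexpslope.const_mul (2 * a)
    have h3 : Tendsto (fun K : ℕ => β₁ / (K:ℝ)) atTop (𝓝 0) := by
      simpa [div_eq_mul_inv] using hinv.const_mul β₁
    have h4 := ((h1.add h2).add (tendsto_const_nhds (x := ν - μ))).add h3
    rw [show (0:ℝ) + 2 * a * β₂ + (ν - μ) + 0 = ν - μ + 2 * a * β₂ by ring] at h4
    apply h4.congr
    intro K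
    rw [hνK]
    ring
  have hsqf : Tendsto (fun K : ℕ => Real.sqrt (f K)) atTop (𝓝 (Real.sqrt D)) :=
    (Real.continuous_sqrt.tendsto D).comp hfD
  have hΛval : Λinf = (ν - μ + 2 * a * β₂) / Real.sqrt D := by
    rw [hΛinf]
    have : ((ν - μ) / (2 * a) + β₂) * (2 * a) = ν - μ + 2 * a * β₂ := by
      field_simp
    rw [this]
  have hΛlim : Tendsto ΛK atTop (𝓝 Λinf) := by
    have h := hN.div hsqf (ne_of_gt hsqD)
    rw [← hΛval] at h
    apply h.congr'
    filter_upwards [hfev, eventually_ge_atTop 1] with K hfK hK1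
    exact (hΛid K hK1 hfK).symm
  have hαlim : Tendsto αK atTop (𝓝 αinf) := by
    have h1 : Λinf + 1 ≠ 0 := by linarith
    have h2 : (Λinf - 1) / (Λinf + 1) ≠ 0 :=
      ne_of_gt (div_pos (by linarith) (by linarith))
    have hc : ContinuousAt (fun x : ℝ => Real.log ((x - 1) / (x + 1))) Λinf := by
      apply ContinuousAt.log
      · exact (continuousAt_id.sub continuousAt_const).div
          (continuousAt_id.add continuousAt_const) h1
      · exact h2
    have := hc.tendsto.comp hΛlim
    rw [hαinf]
    exact this.congr (fun K => by simp [Function.comp, hαK])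
  refine ⟨?_, hαlim, ?_⟩
  · filter_upwards [hφev, hΛlim.eventually (eventually_gt_nhds hΛinf1)] with K h1 h2
    exact ⟨h1, h2⟩
  · have h := (hαlim.neg).div hsqf (ne_of_gt hsqD)
    have hval : -αinf / Real.sqrt D = tinf := by
      rw [htinf, hη]; ring_nf
    rw [hval] at h
    apply h.congr'
    filter_upwards [hfev, eventually_ge_atTop 1] with K hfK hK1
    simp only [Pi.div_apply]
    rw [htK, hsqid K hK1 hfK]
end

section
/- Assume moreover Λ_∞ > 1. Define α_∞ := log((Λ_∞ − 1)/(Λ_∞ + 1)), t*_∞ := −α_∞/(2η), and Ψ(t) := (μ−ν)/(2a) + (η/a)·(2/(1 − exp(α_∞ + 2η·t)) − 1) for t ∈ [0, t*_∞). Fix n ∈ ℕ and t ∈ [0, t*_∞). Then for all sufficiently large integers K the quantity f_K(t) := √(φ_K/ν_K)·(2/(1 − exp(α_K + 2√(ν_K·φ_K)·t)) − 1) + γ_K is well defined (here α_K := log((Λ_K − 1)/(Λ_K + 1)) with Λ_K := √(ν_K/φ_K)·(exp(β₂/K) − γ_K), and t < t*_K := −α_K/(2√(ν_K·φ_K))),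 and f_K(t)^{n·K} converges to exp(n·Ψ(t)) as K → ∞. -/
open Filter Topology

/- STATEMENT 13: Assuming Λ_∞ > 1, with Ψ(t) = (μ−ν)/(2a) + (η/a)(2/(1−exp(α_∞+2ηt)) − 1),
fix n ∈ ℕ and t ∈ [0, t*_∞). Then for all sufficiently large K the quantity
f_K(t) = √(φ_K/ν_K)(2/(1 − exp(α_K + 2√(ν_K φ_K)t)) − 1) + γ_K is well defined
(φ_K > 0, Λ_K > 1 and t < t*_K), and f_K(t)^{nK} → exp(nΨ(t)) as K → ∞. -/
theorem stmt13 (ν μ a β₁ β₂ : ℝ) (hνμ : μ < ν) (hμ : 0 ≤ μ) (ha : 0 < a)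
    (hβ₁ : 0 ≤ β₁) (hβ₂ : 0 ≤ β₂) (hdisc : 4 * a * β₁ < (ν - μ) ^ 2)
    (η Λinf αinf tinf : ℝ) (Ψ : ℝ → ℝ)
    (hη : η = Real.sqrt ((ν - μ) ^ 2 - 4 * a * β₁) / 2)
    (hΛinf : Λinf = ((ν - μ) / (2 * a) + β₂) * (2 * a) / Real.sqrt ((ν - μ) ^ 2 - 4 * a * β₁))
    (hΛinf1 : 1 < Λinf)
    (hαinf : αinf = Real.log ((Λinf - 1) / (Λinf + 1)))
    (htinf : tinf = -αinf / (2 * η))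
    (hΨ : ∀ t : ℝ, Ψ t = (μ - ν) / (2 * a)
      + (η / a) * (2 / (1 - Real.exp (αinf + 2 * η * t)) - 1))
    (νK μK γK φK ΛK αK tK : ℕ → ℝ) (fK : ℕ → ℝ → ℝ)
    (hνK : ∀ K : ℕ, νK K = ν + a * K)
    (hμK : ∀ K : ℕ, μK K = μ + a * K)
    (hγK : ∀ K : ℕ, γK K = (νK K + μK K - β₁ / K) / (2 * νK K))
    (hφK : ∀ K : ℕ, φK K = νK K * (γK K) ^ 2 - μK K)
    (hΛK : ∀ K : ℕ, ΛK K = Real.sqrt (νK K / φK K) * (Real.exp (β₂ / K) - γK K))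
    (hαK : ∀ K : ℕ, αK K = Real.log ((ΛK K - 1) / (ΛK K + 1)))
    (htK : ∀ K : ℕ, tK K = -αK K / (2 * Real.sqrt (νK K * φK K)))
    (hfK : ∀ (K : ℕ) (t : ℝ), fK K t = Real.sqrt (φK K / νK K)
      * (2 / (1 - Real.exp (αK K + 2 * Real.sqrt (νK K * φK K) * t)) - 1) + γK K)
    (n : ℕ) (t : ℝ) (ht : t ∈ Set.Ico 0 tinf) :
    (∀ᶠ K : ℕ in atTop, 0 < φK K ∧ 1 < ΛK K ∧ t < tK K) ∧
    Tendsto (fun K : ℕ => fK K t ^ (n * K)) atTop (𝓝 (Real.exp (n * Ψ t))) := by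

  obtain ⟨ht0, httinf⟩ := ht
  have hν : 0 < ν := lt_of_le_of_lt hμ hνμ
  have hDpos : 0 < (ν - μ) ^ 2 - 4 * a * β₁ := by linarith
  set D : ℝ := (ν - μ) ^ 2 - 4 * a * β₁ with hDdef
  have hsqDpos : 0 < Real.sqrt D := Real.sqrt_pos.mpr hDpos
  have hηpos : 0 < η := by rw [hη]; positivity
  -- auxiliary sequences
  set NK : ℕ → ℝ := fun K => D - 2 * β₁ * (ν + μ) / K + (β₁ / K) ^ 2 with hNKdef
  set PK : ℕ → ℝ := fun K => ν / K + a with hPKdef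
  set gK : ℕ → ℝ := fun K => ((ν - μ) + β₁ / K) / (2 * PK K) with hgKdef
  set qK : ℕ → ℝ := fun K => K * (Real.exp (β₂ / K) - 1) with hqKdef
  set cK : ℕ → ℝ := fun K =>
    2 / (1 - Real.exp (αK K + 2 * Real.sqrt (νK K * φK K) * t)) - 1 with hcKdef
  have hcd : ∀ c : ℝ, Tendsto (fun K : ℕ => c / (K : ℝ)) atTop (𝓝 0) :=
    fun c => tendsto_const_div_atTop_nhds_zero_nat c
  have hNKlim : Tendsto NK atTop (𝓝 D) := by
    have h := ((tendsto_const_nhds (x := D)).sub (hcd (2 * β₁ * (ν + μ)))).add ((hcd β₁).pow 2)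
    simpa using h
  have hsqNKlim : Tendsto (fun K => Real.sqrt (NK K)) atTop (𝓝 (Real.sqrt D)) :=
    (Real.continuous_sqrt.tendsto D).comp hNKlim
  have hPKlim : Tendsto PK atTop (𝓝 a) := by
    have h := (hcd ν).add (tendsto_const_nhds (x := a))
    simpa using h
  have hgKlim : Tendsto gK atTop (𝓝 ((ν - μ) / (2 * a))) := by
    apply Tendsto.div
    · have h := (tendsto_const_nhds (x := ν - μ)).add (hcd β₁)
      simpa using h
    · exact (tendsto_const_nhds (x := (2:ℝ))).mul hPKlim
    · positivity
  -- qK → β₂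
  have hqKlim : Tendsto qK atTop (𝓝 β₂) := by
    have hder : HasDerivAt (fun x : ℝ => Real.exp (β₂ * x)) β₂ 0 := by
      have h := (Real.hasDerivAt_exp (β₂ * 0)).comp 0 ((hasDerivAt_id (0:ℝ)).const_mul β₂)
      simpa [Function.comp_def] using h
    have hslope := hasDerivAt_iff_tendsto_slope.mp hder
    have hinv : Tendsto (fun K : ℕ => 1 / (K : ℝ)) atTop (𝓝[≠] 0) := by
      rw [tendsto_nhdsWithin_iff]
      refine ⟨tendsto_one_div_atTop_nhds_zero_nat, ?_⟩
      filter_upwards [eventually_ge_atTop 1] with K hK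
      have hKn : K ≠ 0 := by omega
      simp only [Set.mem_compl_singleton_iff]
      exact one_div_ne_zero (Nat.cast_ne_zero.mpr hKn)
    have hcomp := hslope.comp hinv
    apply hcomp.congr'
    filter_upwards [eventually_ge_atTop 1] with K hK
    have hKn : K ≠ 0 := by omega
    have hK0 : (K:ℝ) ≠ 0 := Nat.cast_ne_zero.mpr hKn
    show slope (fun x : ℝ => Real.exp (β₂ * x)) 0 (1 / (K:ℝ)) = qK K
    rw [slope_def_field, hqKdef, mul_zero, Real.exp_zero, mul_one_div, sub_zero]
    field_simp
  -- basic positivity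
  have hνKpos : ∀ K : ℕ, 0 < νK K := by
    intro K
    rw [hνK]
    have : 0 ≤ a * (K:ℝ) := by positivity
    linarith
  have hNKpos : ∀ᶠ K : ℕ in atTop, 0 < NK K := hNKlim.eventually (eventually_gt_nhds hDpos)
  -- key algebraic identity
  have hkey : ∀ K : ℕ, 1 ≤ K → 4 * (νK K * φK K) = NK K := by
    intro K hK
    have hK0 : (K:ℝ) ≠ 0 := by
      have : (0:ℝ) < (K:ℝ) := by exact_mod_cast hK
      exact ne_of_gt this
    have hKn : K ≠ 0 := by omega
    have hνne : ν + a * (K:ℝ) ≠ 0 := by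
      have := hνKpos K; rw [hνK] at this; exact ne_of_gt this
    rw [hφK, hγK, hνK, hμK, hNKdef]
    simp only [hDdef]
    field_simp
    ring
  have hγeq : ∀ K : ℕ, 1 ≤ K → γK K = 1 - gK K / K := by
    intro K hK
    have hK0 : (K:ℝ) ≠ 0 := by
      have : (0:ℝ) < (K:ℝ) := by exact_mod_cast hK
      exact ne_of_gt this
    have hKn : K ≠ 0 := by omega
    have hνne : ν + a * (K:ℝ) ≠ 0 := by
      have := hνKpos K; rw [hνK] at this; exact ne_of_gt this
    rw [hγK, hνK, hμK, hgKdef]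
    simp only [hPKdef]
    field_simp
    ring
  have hνKPK : ∀ K : ℕ, 1 ≤ K → νK K = K * PK K := by
    intro K hK
    have hK0 : (K:ℝ) ≠ 0 := by
      have : (0:ℝ) < (K:ℝ) := by exact_mod_cast hK
      exact ne_of_gt this
    have hKn : K ≠ 0 := by omega
    rw [hνK, hPKdef]
    field_simp
  have hφval : ∀ K : ℕ, 1 ≤ K → φK K = NK K / (4 * νK K) := by
    intro K hK
    rw [eq_div_iff (ne_of_gt (by linarith [hνKpos K] : (0:ℝ) < 4 * νK K))]
    linear_combination hkey K hK
  have hφKposE : ∀ᶠ K : ℕ in atTop, 0 < φK K := by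
    filter_upwards [hNKpos, eventually_ge_atTop 1] with K hN hK
    rw [hφval K hK]
    exact div_pos hN (by linarith [hνKpos K])
  -- sqrt identities
  have hsqprod : ∀ᶠ K : ℕ in atTop,
      Real.sqrt (νK K * φK K) = Real.sqrt (NK K) / 2 := by
    filter_upwards [hNKpos, eventually_ge_atTop 1] with K hN hK
    have h4 := hkey K hK
    have : νK K * φK K = NK K / 4 := by linear_combination h4 / 4
    rw [this, show (4:ℝ) = 2 ^ 2 by norm_num, Real.sqrt_div hN.le, Real.sqrt_sq (by norm_num : (0:ℝ) ≤ 2)]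
  have hsqdiv : ∀ᶠ K : ℕ in atTop,
      Real.sqrt (φK K / νK K) = Real.sqrt (NK K) / (2 * νK K) := by
    filter_upwards [hNKpos, eventually_ge_atTop 1] with K hN hK
    have h4 := hkey K hK
    have hν2 : (0:ℝ) < 2 * νK K := by linarith [hνKpos K]
    have hνne : νK K ≠ 0 := ne_of_gt (hνKpos K)
    have : φK K / νK K = NK K / (2 * νK K) ^ 2 := by
      rw [hφval K hK, div_div]
      congr 1
      ring
    rw [this, Real.sqrt_div hN.le, Real.sqrt_sq hν2.le]
  have hsqinv : ∀ᶠ K : ℕ in atTop,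
      Real.sqrt (νK K / φK K) = 2 * νK K / Real.sqrt (NK K) := by
    filter_upwards [hNKpos, hφKposE, eventually_ge_atTop 1] with K hN hφ hK
    have h4 := hkey K hK
    have hν2 : (0:ℝ) < 2 * νK K := by linarith [hνKpos K]
    have hνne : νK K ≠ 0 := ne_of_gt (hνKpos K)
    have : νK K / φK K = (2 * νK K) ^ 2 / NK K := by
      rw [hφval K hK, div_div_eq_mul_div]
      congr 1
      ring
    rw [this, Real.sqrt_div (by positivity), Real.sqrt_sq hν2.le]
  -- ΛK limit
  have hΛeq : ∀ᶠ K : ℕ in atTop,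
      ΛK K = 2 * PK K / Real.sqrt (NK K) * (qK K + gK K) := by
    filter_upwards [hsqinv, hNKpos, eventually_ge_atTop 1] with K hs hN hK
    have hKn : K ≠ 0 := by omega
    have hK0 : (K:ℝ) ≠ 0 := Nat.cast_ne_zero.mpr hKn
    have hsN : Real.sqrt (NK K) ≠ 0 := (Real.sqrt_pos.mpr hN).ne'
    rw [hΛK, hs, hγeq K hK, hνKPK K hK, hqKdef]
    field_simp
    ring
  have hΛKlim : Tendsto ΛK atTop (𝓝 Λinf) := by
    have hlim : Tendsto (fun K => 2 * PK K / Real.sqrt (NK K) * (qK K + gK K)) atTop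
        (𝓝 (2 * a / Real.sqrt D * (β₂ + (ν - μ) / (2 * a)))) := by
      exact (((tendsto_const_nhds (x := (2:ℝ))).mul hPKlim).div hsqNKlim (ne_of_gt hsqDpos)).mul
        (hqKlim.add hgKlim)
    have heq : 2 * a / Real.sqrt D * (β₂ + (ν - μ) / (2 * a)) = Λinf := by
      rw [hΛinf]
      field_simp
      ring
    rw [heq] at hlim
    exact hlim.congr' (by filter_upwards [hΛeq] with K h using h.symm)
  have hΛK1 : ∀ᶠ K : ℕ in atTop, 1 < ΛK K := hΛKlim.eventually (eventually_gt_nhds hΛinf1)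
  -- αK limit
  have hαKlim : Tendsto αK atTop (𝓝 αinf) := by
    have hargpos : 0 < (Λinf - 1) / (Λinf + 1) := by
      apply div_pos <;> linarith
    have h3 : Tendsto (fun K => (ΛK K - 1) / (ΛK K + 1)) atTop
        (𝓝 ((Λinf - 1) / (Λinf + 1))) :=
      (hΛKlim.sub tendsto_const_nhds).div (hΛKlim.add tendsto_const_nhds)
        (by intro h; linarith)
    have h4 := (Real.continuousAt_log (ne_of_gt hargpos)).tendsto.comp h3
    rw [hαinf]
    exact h4.congr fun K => (hαK K).symm
  -- √(νK φK) limit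
  have hBKlim : Tendsto (fun K => Real.sqrt (νK K * φK K)) atTop (𝓝 η) := by
    have hlim : Tendsto (fun K => Real.sqrt (NK K) / 2) atTop (𝓝 (Real.sqrt D / 2)) :=
      hsqNKlim.div_const 2
    rw [hη]
    exact hlim.congr' (by filter_upwards [hsqprod] with K h using h.symm)
  -- tK limit
  have htKlim : Tendsto tK atTop (𝓝 tinf) := by
    have h2η : (2 : ℝ) * η ≠ 0 := by positivity
    have hlim : Tendsto (fun K => -αK K / (2 * Real.sqrt (νK K * φK K))) atTop
        (𝓝 (-αinf / (2 * η))) :=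
      (hαKlim.neg).div ((tendsto_const_nhds (x := (2:ℝ))).mul hBKlim) h2η
    rw [htinf]
    exact hlim.congr fun K => (htK K).symm
  have httK : ∀ᶠ K : ℕ in atTop, t < tK K := htKlim.eventually (eventually_gt_nhds httinf)
  refine ⟨by filter_upwards [hφKposE, hΛK1, httK] with K h1 h2 h3 using ⟨h1, h2, h3⟩, ?_⟩
  -- the exponential factor
  have hexparg : αinf + 2 * η * t < 0 := by
    have : t < -αinf / (2 * η) := by rw [← htinf]; exact httinf
    have h2η : (0:ℝ) < 2 * η := by positivity
    rw [lt_div_iff₀ h2η] at this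
    nlinarith
  set Einf : ℝ := Real.exp (αinf + 2 * η * t) with hEinf
  have hEinf1 : Einf < 1 := Real.exp_lt_one_iff.mpr hexparg
  have hEKlim : Tendsto (fun K => Real.exp (αK K + 2 * Real.sqrt (νK K * φK K) * t)) atTop
      (𝓝 Einf) := by
    apply (Real.continuous_exp.tendsto _).comp
    exact hαKlim.add (((tendsto_const_nhds (x := (2:ℝ))).mul hBKlim).mul_const t)
  set cinf : ℝ := 2 / (1 - Einf) - 1 with hcinf
  have hcKlim : Tendsto cK atTop (𝓝 cinf) := by
    apply Tendsto.sub _ tendsto_const_nhds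
    exact (tendsto_const_nhds (x := (2:ℝ))).div (tendsto_const_nhds.sub hEKlim)
      (sub_ne_zero_of_ne hEinf1.ne')
  -- xK := K (fK - 1)
  set xK : ℕ → ℝ := fun K => Real.sqrt (NK K) / (2 * PK K) * cK K - gK K with hxKdef
  have hxKlim : Tendsto xK atTop (𝓝 (Ψ t)) := by
    have hlim : Tendsto xK atTop
        (𝓝 (Real.sqrt D / (2 * a) * cinf - (ν - μ) / (2 * a))) := by
      exact ((hsqNKlim.div ((tendsto_const_nhds (x := (2:ℝ))).mul hPKlim)
        (by positivity)).mul hcKlim).sub hgKlim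
    have heq : Real.sqrt D / (2 * a) * cinf - (ν - μ) / (2 * a) = Ψ t := by
      rw [hΨ, ← hEinf, ← hcinf, hη]
      field_simp
      ring
    rwa [heq] at hlim
  have hfeq : ∀ᶠ K : ℕ in atTop, fK K t = 1 + xK K / K := by
    filter_upwards [hsqdiv, eventually_ge_atTop 1] with K hs hK
    have hKn : K ≠ 0 := by omega
    have hK0 : (K:ℝ) ≠ 0 := Nat.cast_ne_zero.mpr hKn
    have hPK0 : PK K ≠ 0 := by
      have : (0:ℝ) < ν / K := by positivity
      have : (0:ℝ) < PK K := by rw [hPKdef]; positivity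
      exact ne_of_gt this
    have hc : cK K = 2 / (1 - Real.exp (αK K + 2 * Real.sqrt (νK K * φK K) * t)) - 1 := rfl
    have hx : xK K = Real.sqrt (NK K) / (2 * PK K) * cK K - gK K := rfl
    rw [hfK, ← hc, hs, hγeq K hK, hx, hνKPK K hK]
    field_simp
    ring
  have hfKlim : Tendsto (fun K => fK K t) atTop (𝓝 1) := by
    have h := (tendsto_const_nhds (x := (1:ℝ))).add (hxKlim.mul (hcd 1))
    have h2 : (1:ℝ) + Ψ t * 0 = 1 := by ring
    rw [h2] at h
    apply h.congr'
    filter_upwards [hfeq] with K hf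
    rw [hf, mul_one_div]
  -- log slope function
  set G : ℝ → ℝ := fun x => if x = 1 then 1 else Real.log x / (x - 1) with hGdef
  have hGcont : Tendsto G (𝓝 1) (𝓝 1) := by
    have hder : HasDerivAt Real.log 1 1 := by
      simpa using Real.hasDerivAt_log one_ne_zero
    have hslope := hasDerivAt_iff_tendsto_slope.mp hder
    have hGne : Tendsto G (𝓝[≠] (1:ℝ)) (𝓝 1) := by
      apply hslope.congr'
      filter_upwards [self_mem_nhdsWithin] with x hx
      have hx1 : x ≠ 1 := hx
      simp [slope_def_field, hGdef, hx1, div_sub_div_same, Real.log_one]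
    have hGpure : Tendsto G (pure (1:ℝ)) (𝓝 1) := by
      have hG1 : G 1 = 1 := by simp [hGdef]
      simpa [hG1] using tendsto_pure_nhds G 1
    have hsup : Tendsto G (𝓝[≠] (1:ℝ) ⊔ pure 1) (𝓝 1) := tendsto_sup.mpr ⟨hGne, hGpure⟩
    rwa [nhdsNE_sup_pure] at hsup
  have hlogG : ∀ x : ℝ, Real.log x = G x * (x - 1) := by
    intro x
    by_cases hx : x = 1
    · simp [hGdef, hx]
    · have hx1 : x - 1 ≠ 0 := sub_ne_zero_of_ne hx
      simp only [hGdef, if_neg hx]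
      field_simp
  have hKloglim : Tendsto (fun K : ℕ => (K : ℝ) * Real.log (fK K t)) atTop (𝓝 (Ψ t)) := by
    have hlim : Tendsto (fun K : ℕ => G (fK K t) * xK K) atTop (𝓝 (1 * Ψ t)) :=
      (hGcont.comp hfKlim).mul hxKlim
    rw [one_mul] at hlim
    apply hlim.congr'
    filter_upwards [hfeq, eventually_ge_atTop 1] with K hf hK
    have hKn : K ≠ 0 := by omega
    have hK0 : (K:ℝ) ≠ 0 := Nat.cast_ne_zero.mpr hKn
    rw [hlogG (fK K t), hf]
    field_simp
    try ring
  -- final assembly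
  have hfpos : ∀ᶠ K : ℕ in atTop, 0 < fK K t := hfKlim.eventually (eventually_gt_nhds one_pos)
  have hexp : Tendsto (fun K : ℕ => Real.exp ((n : ℝ) * ((K : ℝ) * Real.log (fK K t)))) atTop
      (𝓝 (Real.exp (n * Ψ t))) :=
    (Real.continuous_exp.tendsto _).comp (hKloglim.const_mul (n : ℝ))
  apply hexp.congr'
  filter_upwards [hfpos] with K hf
  rw [show (n : ℝ) * ((K : ℝ) * Real.log (fK K t)) = ((n * K : ℕ) : ℝ) * Real.log (fK K t) by
    push_cast; ring]
  rw [Real.exp_nat_mul, Real.exp_log hf]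
end
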